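/- arXiv:math/0604347 — 9 statements merged into one kernel-verified Lean document; each statement's English description precedes it below -/
import Mathlib

section
/- Suppose k ≥ 2 is the least integer for which there exist k disjoint congruence classes a_i (mod m_i), with each m_i a positive integer, satisfying gcd(m_i, m_j) < k for all i < j. Then k ≠ 24 and k ≠ 30. -/
/-- The congruence class of `a` modulo `m`, as a set of integers. -/
def congClass (a : ℤ) (m : ℕ) : Set ℤ :=
  {x : ℤ | Int.ModEq (m : ℤ) x a}

/-- `k` is a counterexample to the Disjoint Congruence Classes Conjecture:
there are `k` pairwise disjoint congruence classes whose moduli have pairwise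
gcds all strictly less than `k`. -/
def IsCounterexample (k : ℕ) : Prop :=
  ∃ (a : Fin k → ℤ) (m : Fin k → ℕ),
    (∀ i, 0 < m i) ∧
    (∀ i j, i ≠ j → Disjoint (congClass (a i) (m i)) (congClass (a j) (m j))) ∧
    (∀ i j, i ≠ j → Nat.gcd (m i) (m j) < k)

/-
Let `q` be a prime and suppose `q + 1` disjoint classes `a_i (mod m_i)` have all pairwise gcds at
most `q`. Disjointness forces `gcd(m_i, m_j) ∤ a_i - a_j`, so every gcd is at least `2`. If at
most two moduli are multiples of `q`, dropping one of them leaves `q` classes with pairwise gcds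
below `q`. Otherwise let `S` be the (at least three) indices with `q ∣ m_i`; by pigeonhole on the
residues mod `q` some `m_j` is not a multiple of `q`. The quotients `m_i / q`, `i ∈ S`, are
pairwise coprime, and for `j ∉ S` each `gcd(m_i / q, m_j) = gcd(m_i, m_j)` has a prime factor
below `q`. So the sets of primes below `q` dividing `m_i / q` are disjoint and nonempty, whence
`|S| ≤ π'(q)`, the number of primes below `q`. Fixing three of them, of sizes `a, b, c`, each
`j ∉ S` picks a prime from each set, and two moduli can share at most primes of product
`≤ q ≤ 29`; this bounds the number of `j ∉ S` by `2a + bc`. For `q = 23, 29` the total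
`π'(q) + 2a + bc` is less than `q + 1`, so a minimal counterexample `k = q + 1` would yield a
smaller counterexample `q`.
-/

open Finset Function

theorem not_disjoint_congClass_of_gcd_dvd {a b : ℤ} {m n : ℕ} (h : (m.gcd n : ℤ) ∣ a - b) :
    ¬ Disjoint (congClass a m) (congClass b n) := by
  obtain ⟨w, hw⟩ := h
  have hbezout : (m.gcd n : ℤ) = m * Int.gcdA m n + n * Int.gcdB m n := by
    rw [← Int.gcd_natCast_natCast]; exact Int.gcd_eq_gcd_ab m n
  rw [Set.not_disjoint_iff]
  refine ⟨a - m * (Int.gcdA m n * w), ?_, ?_⟩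
  · exact Int.modEq_iff_dvd.mpr ⟨Int.gcdA m n * w, by ring⟩
  · exact Int.modEq_iff_dvd.mpr ⟨-(Int.gcdB m n * w), by linear_combination -hw - w * hbezout⟩

theorem one_lt_gcd_of_disjoint_congClass {a b : ℤ} {m n : ℕ} (hm : 0 < m)
    (h : Disjoint (congClass a m) (congClass b n)) : 1 < m.gcd n := by
  refine lt_of_le_of_ne (Nat.gcd_pos_of_pos_left n hm) fun h1 => ?_
  exact not_disjoint_congClass_of_gcd_dvd (by rw [← h1]; exact one_dvd _) h

theorem exists_not_dvd_of_card_lt {ι : Type*} [Fintype ι] {a : ι → ℤ} {m : ι → ℕ} {q : ℕ}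
    [NeZero q] (hm : ∀ i, 0 < m i)
    (hdisj : ∀ i j, i ≠ j → Disjoint (congClass (a i) (m i)) (congClass (a j) (m j)))
    (hgcd : ∀ i j, i ≠ j → (m i).gcd (m j) ≤ q) (hcard : q < Fintype.card ι) :
    ∃ j, ¬ q ∣ m j := by
  by_contra! hall
  obtain ⟨i, j, hne, hij⟩ :=
    Fintype.exists_ne_map_eq_of_card_lt (fun i => (a i : ZMod q)) (by rwa [ZMod.card])
  have hgq : (m i).gcd (m j) = q := le_antisymm (hgcd i j hne)
    (Nat.le_of_dvd (Nat.gcd_pos_of_pos_left _ (hm i)) (Nat.dvd_gcd (hall i) (hall j)))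
  refine not_disjoint_congClass_of_gcd_dvd ?_ (hdisj j i hne.symm)
  rw [Nat.gcd_comm, hgq]
  exact (ZMod.intCast_eq_intCast_iff_dvd_sub _ _ _).mp hij

theorem isCounterexample_of_card_filter_dvd_le_two {q : ℕ} {a : Fin (q + 1) → ℤ}
    {m : Fin (q + 1) → ℕ} (hm : ∀ i, 0 < m i)
    (hdisj : ∀ i j, i ≠ j → Disjoint (congClass (a i) (m i)) (congClass (a j) (m j)))
    (hgcd : ∀ i j, i ≠ j → (m i).gcd (m j) < q + 1) (hS : #{i | q ∣ m i} ≤ 2) :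
    IsCounterexample q := by
  set S : Finset (Fin (q + 1)) := {i | q ∣ m i}
  obtain ⟨i₀, hi₀⟩ : ∃ i₀, #(S.erase i₀) ≤ 1 := by
    rcases S.eq_empty_or_nonempty with h | ⟨i₀, hi₀⟩
    · exact ⟨0, by simp [h]⟩
    · exact ⟨i₀, by rw [card_erase_of_mem hi₀]; omega⟩
  have hinj := Fin.succAbove_right_injective (p := i₀)
  have hmem k (hk : q ∣ m (i₀.succAbove k)) : i₀.succAbove k ∈ S.erase i₀ :=
    mem_erase.2 ⟨Fin.succAbove_ne _ _, mem_filter.2 ⟨mem_univ _, hk⟩⟩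
  refine ⟨a ∘ i₀.succAbove, m ∘ i₀.succAbove, fun i => hm _,
    fun i j h => hdisj _ _ (hinj.ne h), fun i j h => ?_⟩
  refine (Nat.lt_succ_iff.1 (hgcd _ _ (hinj.ne h))).lt_of_ne fun hq => h (hinj ?_)
  exact card_le_one.1 hi₀ _ (hmem i ((dvd_of_eq hq.symm).trans (Nat.gcd_dvd_left _ _))) _
    (hmem j ((dvd_of_eq hq.symm).trans (Nat.gcd_dvd_right _ _)))

theorem Nat.coprime_div_div_of_gcd_le {q x y : ℕ} (hx : q ∣ x) (hy : q ∣ y) (hx0 : 0 < x)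
    (h : x.gcd y ≤ q) : Nat.Coprime (x / q) (y / q) := by
  have hgq : x.gcd y = q :=
    le_antisymm h (Nat.le_of_dvd (Nat.gcd_pos_of_pos_left y hx0) (Nat.dvd_gcd hx hy))
  rw [Nat.Coprime, Nat.gcd_div hx hy, hgq, Nat.div_self (Nat.pos_of_dvd_of_pos hx hx0)]

def primeDivisorsBelow (q n : ℕ) : Finset ℕ := {p ∈ Nat.primesBelow q | p ∣ n}

theorem prime_of_mem_primeDivisorsBelow {q n p : ℕ} (h : p ∈ primeDivisorsBelow q n) :
    p.Prime :=
  (Nat.mem_primesBelow.1 (mem_filter.1 h).1).2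

theorem Nat.Coprime.disjoint_primeDivisorsBelow {q x y : ℕ} (h : Nat.Coprime x y) :
    Disjoint (primeDivisorsBelow q x) (primeDivisorsBelow q y) := by
  refine disjoint_left.2 fun p hpx hpy => ?_
  simp only [primeDivisorsBelow, mem_filter, Nat.mem_primesBelow] at hpx hpy
  exact hpx.1.2.not_dvd_one (h.gcd_eq_one ▸ Nat.dvd_gcd hpx.2 hpy.2)

theorem sum_card_primeDivisorsBelow_le {ι : Type*} {T : Finset ι} {q : ℕ} {n : ι → ℕ}
    (hn : (T : Set ι).Pairwise (Nat.Coprime on n)) :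
    ∑ i ∈ T, #(primeDivisorsBelow q (n i)) ≤ q.primeCounting' := by
  classical
  rw [← card_biUnion fun i hi j hj hne => (hn hi hj hne).disjoint_primeDivisorsBelow,
    ← Nat.primesBelow_card_eq_primeCounting']
  exact card_le_card (biUnion_subset.2 fun i _ => filter_subset _ _)

theorem exists_mem_primeDivisorsBelow_div_dvd {q x y : ℕ} (hq : q.Prime) (hx : q ∣ x)
    (hy : ¬ q ∣ y) (h1 : 1 < x.gcd y) (hle : x.gcd y ≤ q) :
    ∃ p ∈ primeDivisorsBelow q (x / q), p ∣ y := by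
  have hgcd : (x / q).gcd y = x.gcd y := by
    conv_rhs => rw [← Nat.mul_div_cancel' hx]
    exact (Nat.Coprime.gcd_mul_left_cancel _ ((Nat.Prime.coprime_iff_not_dvd hq).2 hy)).symm
  set p := (x.gcd y).minFac
  have hpx : p ∣ x / q := (Nat.minFac_dvd _).trans (hgcd ▸ Nat.gcd_dvd_left _ _)
  have hpy : p ∣ y := (Nat.minFac_dvd _).trans (Nat.gcd_dvd_right _ _)
  have hpq : p < q :=
    ((Nat.minFac_le (by omega)).trans hle).lt_of_ne fun h => hy (h ▸ hpy)
  exact ⟨p, mem_filter.2 ⟨Nat.mem_primesBelow.2 ⟨hpq, Nat.minFac_prime h1.ne'⟩, hpx⟩, hpy⟩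

theorem exists_three_distinct_of_subsingleton {ι : Type*} [DecidableEq ι] {S : Finset ι}
    (hS : 3 ≤ #S) {A : ι → Prop} [DecidablePred A] (hA : ∀ i ∈ S, ∀ j ∈ S, A i → A j → i = j) :
    ∃ i₁ ∈ S, ∃ i₂ ∈ S, ∃ i₃ ∈ S, i₁ ≠ i₂ ∧ i₁ ≠ i₃ ∧ i₂ ≠ i₃ ∧ ¬ A i₂ ∧ ¬ A i₃ := by
  have hA₁ : #(S.filter A) ≤ 1 := card_le_one.2 fun i hi j hj =>
    hA i (mem_filter.1 hi).1 j (mem_filter.1 hj).1 (mem_filter.1 hi).2 (mem_filter.1 hj).2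
  have hnA : 1 < #{i ∈ S | ¬ A i} := by
    have := card_filter_add_card_filter_not (s := S) A
    omega
  obtain ⟨i₂, hi₂, i₃, hi₃, h₂₃⟩ := one_lt_card.1 hnA
  rw [mem_filter] at hi₂ hi₃
  obtain ⟨i₁, hi₁⟩ : ((S.erase i₂).erase i₃).Nonempty := by
    rw [← card_pos, card_erase_of_mem (mem_erase.2 ⟨h₂₃.symm, hi₃.1⟩), card_erase_of_mem hi₂.1]
    omega
  simp only [mem_erase] at hi₁
  exact ⟨i₁, hi₁.2.2, i₂, hi₂.1, i₃, hi₃.1, hi₁.2.1, hi₁.1, h₂₃, hi₂.2, hi₃.2⟩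

theorem Nat.Prime.eq_three_of_mul_le_29 {p r : ℕ} (hr : r.Prime) (hp : 5 ≤ p) (hr2 : r ≠ 2)
    (hpr : p ≠ r) (h : p * r ≤ 29) : r = 3 := by
  by_contra hr3
  have hr5 := hr.five_le_of_ne_two_of_ne_three hr2 hr3
  have : p * 5 ≤ 29 := (Nat.mul_le_mul_left p hr5).trans h
  have : 5 * r ≤ 29 := (Nat.mul_le_mul_right r hp).trans h
  omega

theorem card_filter_le_nine_le_two {P : Finset ℕ} (hP : ∀ p ∈ P, p.Prime) (h2 : 2 ∉ P)
    (h3 : 3 ∉ P) : #{p ∈ P | p ≤ 9} ≤ 2 := by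
  refine (card_le_card (t := {5, 7}) fun p hp => ?_).trans card_le_two
  obtain ⟨hpP, hp9⟩ := mem_filter.1 hp
  have hp := hP p hpP
  have h5 := hp.five_le_of_ne_two_of_ne_three (ne_of_mem_of_not_mem hpP h2)
    (ne_of_mem_of_not_mem hpP h3)
  interval_cases p <;> simp_all +decide

theorem card_le_two_mul_add_mul_of_three_notMem {κ : Type*} [Fintype κ] {m : κ → ℕ}
    {P₁ P₂ P₃ : Finset ℕ} (hcommon : ∀ j l, j ≠ l → ∀ d, d ∣ m j → d ∣ m l → d ≤ 29)
    (hP₁ : ∀ p ∈ P₁, p.Prime) (hP₂ : ∀ p ∈ P₂, p.Prime) (hP₃ : ∀ p ∈ P₃, p.Prime)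
    (h₁₂ : Disjoint P₁ P₂) (h₁₃ : Disjoint P₁ P₃) (h₂₃ : Disjoint P₂ P₃)
    (h2₂ : 2 ∉ P₂) (h3₂ : 3 ∉ P₂) (h2₃ : 2 ∉ P₃)
    (hσ₁ : ∀ j, ∃ p ∈ P₁, p ∣ m j) (hσ₂ : ∀ j, ∃ p ∈ P₂, p ∣ m j)
    (hσ₃ : ∀ j, ∃ p ∈ P₃, p ∣ m j) :
    Fintype.card κ ≤ 2 * #P₁ + #P₂ * #P₃ := by
  classical
  choose σ₁ hσ₁P hσ₁m using hσ₁
  choose σ₂ hσ₂P hσ₂m using hσ₂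
  choose σ₃ hσ₃P hσ₃m using hσ₃
  have hne₁₂ j l : σ₁ j ≠ σ₂ l := ne_of_mem_of_not_mem (hσ₁P j) (disjoint_right.1 h₁₂ (hσ₂P l))
  have hne₁₃ j l : σ₁ j ≠ σ₃ l := ne_of_mem_of_not_mem (hσ₁P j) (disjoint_right.1 h₁₃ (hσ₃P l))
  have hne₂₃ j l : σ₂ j ≠ σ₃ l := ne_of_mem_of_not_mem (hσ₂P j) (disjoint_right.1 h₂₃ (hσ₃P l))
  have hcop₁₂ j := (Nat.coprime_primes (hP₁ _ (hσ₁P j)) (hP₂ _ (hσ₂P j))).2 (hne₁₂ j j)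
  have hcop₁₃ j := (Nat.coprime_primes (hP₁ _ (hσ₁P j)) (hP₃ _ (hσ₃P j))).2 (hne₁₃ j j)
  have hcop₂₃ j := (Nat.coprime_primes (hP₂ _ (hσ₂P j)) (hP₃ _ (hσ₃P j))).2 (hne₂₃ j j)
  have hdvd₂₃ j : σ₂ j * σ₃ j ∣ m j := (hcop₂₃ j).mul_dvd_of_dvd_of_dvd (hσ₂m j) (hσ₃m j)
  have hdvd₁₂₃ j : σ₁ j * (σ₂ j * σ₃ j) ∣ m j :=
    ((hcop₁₂ j).mul_right (hcop₁₃ j)).mul_dvd_of_dvd_of_dvd (hσ₁m j) (hdvd₂₃ j)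
  have hfive₂ j : 5 ≤ σ₂ j := (hP₂ _ (hσ₂P j)).five_le_of_ne_two_of_ne_three
    (ne_of_mem_of_not_mem (hσ₂P j) h2₂) (ne_of_mem_of_not_mem (hσ₂P j) h3₂)
  have hspecial j l (hne : j ≠ l) (e₂ : σ₂ j = σ₂ l) (e₃ : σ₃ j = σ₃ l) :
      σ₃ j = 3 ∧ σ₂ j ≤ 9 := by
    have hle := hcommon j l hne _ (hdvd₂₃ j) (by rw [e₂, e₃]; exact hdvd₂₃ l)
    have h3 := (hP₃ _ (hσ₃P j)).eq_three_of_mul_le_29 (hfive₂ j)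
      (ne_of_mem_of_not_mem (hσ₃P j) h2₃) (hne₂₃ j j) hle
    exact ⟨h3, by rw [h3] at hle; omega⟩
  have hnot_special j l (hne : j ≠ l) (e₁ : σ₁ j = σ₁ l) (e₂ : σ₂ j = σ₂ l)
      (e₃ : σ₃ j = σ₃ l) : False := by
    have hle := hcommon j l hne _ (hdvd₁₂₃ j) (by rw [e₁, e₂, e₃]; exact hdvd₁₂₃ l)
    rw [(hspecial j l hne e₂ e₃).1] at hle
    nlinarith [(hP₁ _ (hσ₁P j)).two_le, hfive₂ j]
  -- `(σ₂, σ₃)` determines `j` unless `σ₃ = 3` and `σ₂ ∈ {5, 7}`; then `(σ₂, σ₁)` does,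
  -- because a common divisor `3 * 5 * 2 = 30` of two moduli is too large.
  let f j := if σ₃ j = 3 ∧ σ₂ j ≤ 9 then (σ₂ j, σ₁ j) else (σ₂ j, σ₃ j)
  calc Fintype.card κ = #(univ : Finset κ) := rfl
    _ ≤ #({p ∈ P₂ | p ≤ 9} ×ˢ P₁ ∪ P₂ ×ˢ P₃) := by
      refine card_le_card_of_injOn f (fun j _ => ?_) fun j _ l _ hjl => ?_
      · simp only [f]
        split_ifs with h
        · simp [hσ₂P j, hσ₁P j, h.2]
        · simp [hσ₂P j, hσ₃P j]
      · by_contra hne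
        simp only [f] at hjl
        split_ifs at hjl with hj hl hl <;> simp only [Prod.mk.injEq] at hjl
        · exact hnot_special j l hne hjl.2 hjl.1 (hj.1.trans hl.1.symm)
        · exact hne₁₃ j l hjl.2
        · exact hne₁₃ l j hjl.2.symm
        · exact hj (hspecial j l hne hjl.1 hjl.2)
    _ ≤ #{p ∈ P₂ | p ≤ 9} * #P₁ + #P₂ * #P₃ := by
      grw [card_union_le, card_product, card_product]
    _ ≤ 2 * #P₁ + #P₂ * #P₃ := by grw [card_filter_le_nine_le_two hP₂ h2₂ h3₂]

theorem card_le_two_mul_add_mul {κ : Type*} [Fintype κ] {m : κ → ℕ}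
    {P₁ P₂ P₃ : Finset ℕ} (hcommon : ∀ j l, j ≠ l → ∀ d, d ∣ m j → d ∣ m l → d ≤ 29)
    (hP₁ : ∀ p ∈ P₁, p.Prime) (hP₂ : ∀ p ∈ P₂, p.Prime) (hP₃ : ∀ p ∈ P₃, p.Prime)
    (h₁₂ : Disjoint P₁ P₂) (h₁₃ : Disjoint P₁ P₃) (h₂₃ : Disjoint P₂ P₃)
    (h2₂ : 2 ∉ P₂) (h2₃ : 2 ∉ P₃)
    (hσ₁ : ∀ j, ∃ p ∈ P₁, p ∣ m j) (hσ₂ : ∀ j, ∃ p ∈ P₂, p ∣ m j)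
    (hσ₃ : ∀ j, ∃ p ∈ P₃, p ∣ m j) :
    Fintype.card κ ≤ 2 * #P₁ + #P₂ * #P₃ := by
  by_cases h3₂ : 3 ∈ P₂
  · rw [mul_comm #P₂]
    exact card_le_two_mul_add_mul_of_three_notMem hcommon hP₁ hP₃ hP₂ h₁₃ h₁₂ h₂₃.symm h2₃
      (disjoint_left.1 h₂₃ h3₂) h2₂ hσ₁ hσ₃ hσ₂
  · exact card_le_two_mul_add_mul_of_three_notMem hcommon hP₁ hP₂ hP₃ h₁₂ h₁₃ h₂₃ h2₂ h3₂ h2₃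
      hσ₁ hσ₂ hσ₃

theorem exists_card_le_of_three_le_card_filter_dvd {ι : Type*} [Fintype ι] [DecidableEq ι]
    {m : ι → ℕ} {q : ℕ} (hq : q.Prime) (hq29 : q ≤ 29) (hm : ∀ i, 0 < m i)
    (hgcd : ∀ i j, i ≠ j → 1 < (m i).gcd (m j) ∧ (m i).gcd (m j) ≤ q)
    (hS : 3 ≤ #{i | q ∣ m i}) (hO : ∃ j, ¬ q ∣ m j) :
    ∃ a b c, 0 < a ∧ 0 < b ∧ 0 < c ∧ a + b + c ≤ q.primeCounting' ∧
      Fintype.card ι ≤ q.primeCounting' + (2 * a + b * c) := by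
  set S : Finset ι := {i | q ∣ m i}
  set P : ι → Finset ℕ := fun i => primeDivisorsBelow q (m i / q)
  have hcop : (S : Set ι).Pairwise (Nat.Coprime on fun i => m i / q) := fun i hi i' hi' hne =>
    Nat.coprime_div_div_of_gcd_le (mem_filter.1 hi).2 (mem_filter.1 hi').2 (hm i) (hgcd i i' hne).2
  have hcover : ∀ i ∈ S, ∀ j, ¬ q ∣ m j → ∃ p ∈ P i, p ∣ m j := fun i hi j hj =>
    have hij : i ≠ j := fun h => hj (h ▸ (mem_filter.1 hi).2)
    exists_mem_primeDivisorsBelow_div_dvd hq (mem_filter.1 hi).2 hj (hgcd i j hij).1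
      (hgcd i j hij).2
  obtain ⟨j₀, hj₀⟩ := hO
  have hPpos : ∀ i ∈ S, 0 < #(P i) := fun i hi =>
    card_pos.2 ((hcover i hi j₀ hj₀).imp fun _ hp => hp.1)
  obtain ⟨i₁, hi₁, i₂, hi₂, i₃, hi₃, h₁₂, h₁₃, h₂₃, h2₂, h2₃⟩ :=
    exists_three_distinct_of_subsingleton hS (A := fun i => 2 ∈ P i) fun i hi i' hi' h h' => by
      by_contra hne
      exact disjoint_left.1 (hcop hi hi' hne).disjoint_primeDivisorsBelow h h'
  have hsub : ({i₁, i₂, i₃} : Finset ι) ⊆ S := by simp [insert_subset_iff, hi₁, hi₂, hi₃]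
  refine ⟨#(P i₁), #(P i₂), #(P i₃), hPpos i₁ hi₁, hPpos i₂ hi₂, hPpos i₃ hi₃, ?_, ?_⟩
  · have := sum_card_primeDivisorsBelow_le (q := q) (hcop.mono (coe_subset.2 hsub))
    rwa [sum_insert (by simp [h₁₂, h₁₃]), sum_pair h₂₃, ← add_assoc] at this
  have hS' : #S ≤ q.primeCounting' := calc
    #S = ∑ i ∈ S, 1 := card_eq_sum_ones S
    _ ≤ ∑ i ∈ S, #(P i) := sum_le_sum hPpos
    _ ≤ q.primeCounting' := sum_card_primeDivisorsBelow_le hcop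
  have hO' : Fintype.card {j // ¬ q ∣ m j} ≤ 2 * #(P i₁) + #(P i₂) * #(P i₃) := by
    refine card_le_two_mul_add_mul (κ := {j // ¬ q ∣ m j}) (m := fun j => m j)
      (fun j l hne d hj hl => (Nat.le_of_dvd (Nat.gcd_pos_of_pos_left _ (hm j))
        (Nat.dvd_gcd hj hl)).trans ((hgcd j l (Subtype.coe_injective.ne hne)).2.trans hq29))
      (fun _ => prime_of_mem_primeDivisorsBelow) (fun _ => prime_of_mem_primeDivisorsBelow)
      (fun _ => prime_of_mem_primeDivisorsBelow) (hcop hi₁ hi₂ h₁₂).disjoint_primeDivisorsBelow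
      (hcop hi₁ hi₃ h₁₃).disjoint_primeDivisorsBelow
      (hcop hi₂ hi₃ h₂₃).disjoint_primeDivisorsBelow h2₂ h2₃
      (fun j => hcover i₁ hi₁ j j.2) (fun j => hcover i₂ hi₂ j j.2) (fun j => hcover i₃ hi₃ j j.2)
  have hcard : #S + #{i | ¬ q ∣ m i} = Fintype.card ι := card_filter_add_card_filter_not _
  rw [Fintype.card_subtype] at hO'
  omega

theorem isCounterexample_of_succ {q : ℕ} (hq : q.Prime) (hq29 : q ≤ 29)
    (hbound : ∀ a b c, 0 < a → 0 < b → 0 < c → a + b + c ≤ q.primeCounting' →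
      q.primeCounting' + (2 * a + b * c) ≤ q)
    (h : IsCounterexample (q + 1)) : IsCounterexample q := by
  obtain ⟨r, m, hm, hdisj, hgcd⟩ := h
  by_cases hS : #{i | q ∣ m i} ≤ 2
  · exact isCounterexample_of_card_filter_dvd_le_two hm hdisj hgcd hS
  have : NeZero q := ⟨hq.ne_zero⟩
  have hgcd' i j (hne : i ≠ j) : 1 < (m i).gcd (m j) ∧ (m i).gcd (m j) ≤ q :=
    ⟨one_lt_gcd_of_disjoint_congClass (hm i) (hdisj i j hne), Nat.lt_succ_iff.1 (hgcd i j hne)⟩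
  have hO := exists_not_dvd_of_card_lt hm hdisj (fun i j hne => (hgcd' i j hne).2) (by simp)
  obtain ⟨a, b, c, ha, hb, hc, habc, hcard⟩ :=
    exists_card_le_of_three_le_card_filter_dvd hq hq29 hm hgcd' (by omega) hO
  have := hbound a b c ha hb hc habc
  rw [Fintype.card_fin] at hcard
  omega

theorem minimal_counterexample_ne_24_30_general (k : ℕ)
    (hce : IsCounterexample k)
    (hmin : ∀ k', 2 ≤ k' → IsCounterexample k' → k ≤ k') :
    k ≠ 24 ∧ k ≠ 30 := by
  have ne_succ q (hq : q.Prime) (hq29 : q ≤ 29)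
      (hbound : ∀ a b c, 0 < a → 0 < b → 0 < c → a + b + c ≤ q.primeCounting' →
        q.primeCounting' + (2 * a + b * c) ≤ q) : k ≠ q + 1 := by
    rintro rfl
    have := hmin q hq.two_le (isCounterexample_of_succ hq hq29 hbound hce)
    omega
  refine ⟨ne_succ 23 (by norm_num) (by norm_num) fun a b c _ _ _ habc => ?_,
    ne_succ 29 (by norm_num) (by norm_num) fun a b c _ _ _ habc => ?_⟩
  · rw [show Nat.primeCounting' 23 = 8 by decide] at habc ⊢
    have : b ≤ 8 := by omega
    have : c ≤ 8 := by omega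
    interval_cases b <;> interval_cases c <;> omega
  · rw [show Nat.primeCounting' 29 = 9 by decide] at habc ⊢
    have : b ≤ 9 := by omega
    have : c ≤ 9 := by omega
    interval_cases b <;> interval_cases c <;> omega

theorem minimal_counterexample_ne_24_30 (k : ℕ) (hk : 2 ≤ k)
    (hce : IsCounterexample k)
    (hmin : ∀ k', 2 ≤ k' → IsCounterexample k' → k ≤ k') :
    k ≠ 24 ∧ k ≠ 30 :=
  minimal_counterexample_ne_24_30_general k hce hmin
end

section
/- Let a_1 (mod m_1), …, a_ℓ (mod m_ℓ) be congruence classes (each m_i a positive integer), and let M be a positive multiple of lcm{gcd(m_i, m_j) : 1 ≤ i < j ≤ ℓ}. If Σ_{i=1}^{ℓ} 1/gcd(m_i, M) > 1 (as a sum of rationals), then the classes a_1 (mod m_1), …, a_ℓ (mod m_ℓ) are not pairwise disjoint; that is, there exist i < j such that a_i (mod m_i) and a_j (mod m_j) intersect. -/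
open Finset

theorem Int.exists_modEq_and_modEq_of_modEq_gcd {a b m n : ℤ} (h : a ≡ b [ZMOD m.gcd n]) :
    ∃ x, x ≡ a [ZMOD m] ∧ x ≡ b [ZMOD n] := by
  obtain ⟨u, v, huv⟩ := (gcd_dvd_iff_exists m n).mp (Int.coe_gcd m n ▸ h.dvd)
  refine ⟨a + m * u, Int.modEq_iff_dvd.mpr ⟨-u, by ring⟩, Int.modEq_iff_dvd.mpr ⟨v, ?_⟩⟩
  linear_combination huv

theorem congClass_inter_nonempty_of_modEq_gcd {a b : ℤ} {m n : ℕ}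
    (h : a ≡ b [ZMOD m.gcd n]) : (congClass a m ∩ congClass b n).Nonempty :=
  Int.exists_modEq_and_modEq_of_modEq_gcd (by rwa [Int.gcd_natCast_natCast])

theorem congClass_inter_nonempty_of_mem_congClass_gcd {a b x : ℤ} {m n M : ℕ}
    (hmn : m.gcd n ∣ M) (ha : x ∈ congClass a (m.gcd M)) (hb : x ∈ congClass b (n.gcd M)) :
    (congClass a m ∩ congClass b n).Nonempty := by
  have hm : (m.gcd n : ℤ) ∣ m.gcd M := by
    exact_mod_cast Nat.dvd_gcd (Nat.gcd_dvd_left m n) hmn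
  have hn : (m.gcd n : ℤ) ∣ n.gcd M := by
    exact_mod_cast Nat.dvd_gcd (Nat.gcd_dvd_right m n) hmn
  exact congClass_inter_nonempty_of_modEq_gcd ((ha.of_dvd hm).symm.trans (hb.of_dvd hn))

theorem Int.card_Ico_filter_modEq_of_length_eq_mul (a v : ℤ) {r : ℤ} (hr : 0 < r) (k : ℕ) :
    #{x ∈ Ico a (a + r * k) | x ≡ v [ZMOD r]} = k := by
  have hlen : (((a + r * k : ℤ) : ℚ) - v) / r = ((a : ℚ) - v) / r + k := by
    push_cast
    field_simp
    ring
  have := Int.Ico_filter_modEq_card a (a + r * k) hr v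
  rw [hlen, Int.ceil_add_natCast, add_sub_cancel_left, max_eq_left (by positivity)] at this
  exact_mod_cast this

theorem Finset.exists_ne_not_disjoint_of_card_lt_sum_card {ι α : Type*} [DecidableEq α]
    {s : Finset ι} {t : ι → Finset α} {u : Finset α} (htu : ∀ i ∈ s, t i ⊆ u)
    (hcard : #u < ∑ i ∈ s, #(t i)) :
    ∃ i ∈ s, ∃ j ∈ s, i ≠ j ∧ ¬Disjoint (t i) (t j) := by
  by_contra! hdisj
  have : ∑ i ∈ s, #(t i) ≤ #u := by
    rw [← card_biUnion hdisj]
    exact card_le_card (biUnion_subset.mpr htu)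
  omega

theorem Nat.gcd_dvd_of_lcm_gcd_dvd {ι : Type*} [Fintype ι] [LinearOrder ι] {m : ι → ℕ} {M : ℕ}
    (h : ({p : ι × ι | p.1 < p.2} : Finset (ι × ι)).lcm (fun p => (m p.1).gcd (m p.2)) ∣ M)
    {i j : ι} (hij : i < j) : (m i).gcd (m j) ∣ M :=
  (dvd_lcm (s := {p : ι × ι | p.1 < p.2}) (b := (i, j)) (by simpa using hij)).trans h

theorem not_disjoint_of_sum_gt_one_general (ℓ : ℕ) (a : Fin ℓ → ℤ) (m : Fin ℓ → ℕ)
    (M : ℕ) (hM : 0 < M)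
    (hdvd : ((Finset.univ.filter (fun p : Fin ℓ × Fin ℓ => p.1 < p.2)).lcm
        (fun p => Nat.gcd (m p.1) (m p.2))) ∣ M)
    (hsum : 1 < ∑ i, (1 : ℚ) / (Nat.gcd (m i) M)) :
    ∃ i j : Fin ℓ, i < j ∧
      (congClass (a i) (m i) ∩ congClass (a j) (m j)).Nonempty := by
  have hd i : 0 < (m i).gcd M := Nat.gcd_pos_of_pos_right _ hM
  let S i : Finset ℤ := {x ∈ Ico 0 (M : ℤ) | x ≡ a i [ZMOD (m i).gcd M]}
  have hcard i : (#(S i) : ℚ) = M * (1 / (m i).gcd M) := by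
    have := Int.card_Ico_filter_modEq_of_length_eq_mul 0 (a i) (Int.natCast_pos.mpr (hd i))
      (M / (m i).gcd M)
    rw [zero_add, ← Nat.cast_mul, Nat.mul_div_cancel' (Nat.gcd_dvd_right _ _)] at this
    rw [this, Nat.cast_div (Nat.gcd_dvd_right _ _) (by exact_mod_cast (hd i).ne'), mul_one_div]
  have hcount : #(Ico 0 (M : ℤ)) < ∑ i, #(S i) := by
    have : (M : ℚ) * 1 < M * ∑ i, (1 : ℚ) / (m i).gcd M :=
      mul_lt_mul_of_pos_left hsum (by exact_mod_cast hM)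
    rw [Int.card_Ico, sub_zero, Int.toNat_natCast, ← Nat.cast_lt (α := ℚ)]
    rwa [mul_one, mul_sum, ← sum_congr rfl fun i _ => hcard i, ← Nat.cast_sum] at this
  obtain ⟨i, -, j, -, hij, hSij⟩ :=
    exists_ne_not_disjoint_of_card_lt_sum_card (fun i _ => filter_subset _ _) hcount
  obtain ⟨x, hxi, hxj⟩ := not_disjoint_iff.mp hSij
  rcases hij.lt_or_gt with h | h
  · exact ⟨i, j, h, congClass_inter_nonempty_of_mem_congClass_gcd
      (Nat.gcd_dvd_of_lcm_gcd_dvd hdvd h) (mem_filter.mp hxi).2 (mem_filter.mp hxj).2⟩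
  · exact ⟨j, i, h, congClass_inter_nonempty_of_mem_congClass_gcd
      (Nat.gcd_dvd_of_lcm_gcd_dvd hdvd h) (mem_filter.mp hxj).2 (mem_filter.mp hxi).2⟩

theorem not_disjoint_of_sum_gt_one (ℓ : ℕ) (a : Fin ℓ → ℤ) (m : Fin ℓ → ℕ)
    (hm : ∀ i, 0 < m i) (M : ℕ) (hM : 0 < M)
    (hdvd : ((Finset.univ.filter (fun p : Fin ℓ × Fin ℓ => p.1 < p.2)).lcm
        (fun p => Nat.gcd (m p.1) (m p.2))) ∣ M)
    (hsum : 1 < ∑ i, (1 : ℚ) / (Nat.gcd (m i) M)) :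
    ∃ i j : Fin ℓ, i < j ∧
      (congClass (a i) (m i) ∩ congClass (a j) (m j)).Nonempty :=
  not_disjoint_of_sum_gt_one_general ℓ a m M hM hdvd hsum
end

section
/- If three congruence classes a_1 (mod m_1), a_2 (mod m_2), a_3 (mod m_3) (with each m_i a positive integer) are pairwise disjoint, then there exist i < j with gcd(m_i, m_j) ≥ 3. -/
/-! Disjointness of `a mod m` and `b mod n` forces `gcd m n ∤ a - b`, by Bézout. Among three
integers two have the same parity; for that pair the gcd of the moduli cannot divide `2`,
so it is at least `3`. -/

theorem congClass_inter_nonempty_of_gcd_dvd {a b : ℤ} {m n : ℕ}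
    (h : (Nat.gcd m n : ℤ) ∣ a - b) : (congClass a m ∩ congClass b n).Nonempty := by
  obtain ⟨k, hk⟩ := h
  have hbezout : (Nat.gcd m n : ℤ) = m * Int.gcdA m n + n * Int.gcdB m n := by
    rw [← Int.gcd_natCast_natCast]
    exact Int.gcd_eq_gcd_ab _ _
  refine ⟨a - k * Int.gcdA m n * m, ?_, ?_⟩
  · exact Int.modEq_iff_dvd.mpr ⟨k * Int.gcdA m n, by ring⟩
  · exact Int.modEq_iff_dvd.mpr
      ⟨-(k * Int.gcdB m n), by linear_combination -hk - k * hbezout⟩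

theorem not_gcd_dvd_sub_of_disjoint {a b : ℤ} {m n : ℕ}
    (h : Disjoint (congClass a m) (congClass b n)) : ¬ (Nat.gcd m n : ℤ) ∣ a - b :=
  fun hdvd ↦ (congClass_inter_nonempty_of_gcd_dvd hdvd).not_disjoint h

theorem exists_ne_two_dvd_sub_of_fin_three (x : Fin 3 → ℤ) :
    ∃ i j, i ≠ j ∧ (2 : ℤ) ∣ x i - x j := by
  by_contra! h
  have h01 := h 0 1 (by decide)
  have h12 := h 1 2 (by decide)
  have h02 := h 0 2 (by decide)
  omega

theorem dccc_three (a : Fin 3 → ℤ) (m : Fin 3 → ℕ) (hm : ∀ i, 0 < m i)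
    (hdisj : ∀ i j, i ≠ j → Disjoint (congClass (a i) (m i)) (congClass (a j) (m j))) :
    ∃ i j : Fin 3, i < j ∧ 3 ≤ Nat.gcd (m i) (m j) := by
  obtain ⟨i, j, hij, heven⟩ := exists_ne_two_dvd_sub_of_fin_three a
  have hgcd_pos : 0 < Nat.gcd (m i) (m j) := Nat.gcd_pos_of_pos_left _ (hm i)
  have hgcd_ge : 3 ≤ Nat.gcd (m i) (m j) := by
    by_contra! hlt
    have hgcd_dvd_two : Nat.gcd (m i) (m j) ∣ 2 := by interval_cases Nat.gcd (m i) (m j) <;> decide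
    exact not_gcd_dvd_sub_of_disjoint (hdisj i j hij)
      ((Int.natCast_dvd_natCast.mpr hgcd_dvd_two).trans heven)
  rcases hij.lt_or_gt with hlt | hgt
  · exact ⟨i, j, hlt, hgcd_ge⟩
  · exact ⟨j, i, hgt, Nat.gcd_comm (m i) (m j) ▸ hgcd_ge⟩
end

section
/- Assume the minimal-counterexample hypothesis. Then for all i, the modulus m_i divides N; moreover N divides L_k := lcm{1, 2, …, k−1}; and N = lcm{m_1, m_2, …, m_k}. -/
/-- `N = lcm {gcd (m i) (m j) : i < j}`. -/
def Nval (k : ℕ) (m : Fin k → ℕ) : ℕ :=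
  (Finset.univ.filter (fun p : Fin k × Fin k => p.1 < p.2)).lcm
    (fun p => Nat.gcd (m p.1) (m p.2))

/-!
Disjointness of `a (mod m)` and `b (mod n)` only depends on `gcd m n`. If the full power `p ^ e`
of a prime dividing `m i` divided no other `m j`, then dividing `m i` by `p` would leave every
pairwise gcd unchanged, giving a smaller system and contradicting the minimality of `∑ m i`.
Hence every prime power dividing `m i` divides some `gcd (m i) (m j)`, so `m i ∣ N`. The
remaining claims are bookkeeping: all pairwise gcds lie in `[1, k - 1]`, and `N ∣ lcm m`
trivially.
-/

open Finset Function

theorem congClass_disjoint_iff {a b : ℤ} {m n : ℕ} :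
    Disjoint (congClass a m) (congClass b n) ↔ ¬ a ≡ b [ZMOD m.gcd n] := by
  rw [← not_iff_not, not_not, Set.not_disjoint_iff]
  constructor
  · rintro ⟨x, hxa, hxb⟩
    exact (hxa.of_dvd (Int.natCast_dvd_natCast.mpr (m.gcd_dvd_left n))).symm.trans
      (hxb.of_dvd (Int.natCast_dvd_natCast.mpr (m.gcd_dvd_right n)))
  · intro h
    obtain ⟨t, ht⟩ := h.dvd
    have hbezout := Nat.gcd_eq_gcd_ab m n
    -- from `gcd m n = m u + n v` and `b - a = t gcd m n`, the point `a + m u t` is in both classes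
    refine ⟨a + m * m.gcdA n * t, ?_, ?_⟩
    · exact Int.modEq_iff_dvd.mpr ⟨-(m.gcdA n * t), by ring⟩
    · exact Int.modEq_iff_dvd.mpr ⟨m.gcdB n * t, by linear_combination ht + t * hbezout⟩

theorem Nat.gcd_div_prime_left {p e m n : ℕ} (hp : p.Prime) (hm : p ^ e ∣ m)
    (hn : ¬ p ^ e ∣ n) :
    (m / p).gcd n = m.gcd n := by
  obtain ⟨t, ht⟩ := m.gcd_dvd_left n
  have hpt : p ∣ t := by
    by_contra hpt
    have hcop : (p ^ e).Coprime t := (hp.coprime_iff_not_dvd.mpr hpt).pow_left e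
    exact hn ((hcop.dvd_of_dvd_mul_right (ht ▸ hm)).trans (m.gcd_dvd_right n))
  have hpm : p ∣ m := hpt.trans (Dvd.intro_left _ ht.symm)
  apply Nat.dvd_antisymm
  · exact Nat.gcd_dvd_gcd_of_dvd_left n (Nat.div_dvd_of_dvd hpm)
  · refine Nat.dvd_gcd (Nat.dvd_div_of_mul_dvd ?_) (m.gcd_dvd_right n)
    exact (Nat.mul_dvd_mul_right hpt _).trans (dvd_of_eq (by rw [mul_comm, ← ht]))

theorem gcd_update_div_prime {ι : Type*} [DecidableEq ι] {m : ι → ℕ} {i : ι} {p e : ℕ}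
    (hp : p.Prime) (hpe : p ^ e ∣ m i) (hne : ∀ j, j ≠ i → ¬ p ^ e ∣ m j) {i' j' : ι}
    (hij : i' ≠ j') :
    (update m i (m i / p) i').gcd (update m i (m i / p) j') = (m i').gcd (m j') := by
  rcases eq_or_ne i' i with rfl | hi
  · simp only [update_self, update_of_ne hij.symm]
    exact Nat.gcd_div_prime_left hp hpe (hne j' hij.symm)
  rcases eq_or_ne j' i with rfl | hj
  · simp only [update_self, update_of_ne hij]
    rw [Nat.gcd_comm, Nat.gcd_div_prime_left hp hpe (hne i' hij), Nat.gcd_comm]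
  · simp only [update_of_ne hi, update_of_ne hj]

theorem gcd_dvd_Nval {k : ℕ} (m : Fin k → ℕ) {i j : Fin k} (hij : i ≠ j) :
    (m i).gcd (m j) ∣ Nval k m := by
  rcases hij.lt_or_gt with hlt | hlt
  · exact Finset.dvd_lcm (mem_filter.mpr ⟨mem_univ (i, j), hlt⟩)
  · exact Nat.gcd_comm (m j) (m i) ▸ Finset.dvd_lcm (mem_filter.mpr ⟨mem_univ (j, i), hlt⟩)

theorem Nval_dvd_lcm {k : ℕ} (m : Fin k → ℕ) : Nval k m ∣ univ.lcm m :=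
  Finset.lcm_dvd fun q _ => (Nat.gcd_dvd_left _ _).trans (Finset.dvd_lcm (mem_univ q.1))

structure IsDisjointSystem (k : ℕ) (a : Fin k → ℤ) (m : Fin k → ℕ) : Prop where
  pos : ∀ i, 0 < m i
  disjoint : ∀ i j, i ≠ j → Disjoint (congClass (a i) (m i)) (congClass (a j) (m j))
  gcd_lt : ∀ i j, i ≠ j → (m i).gcd (m j) < k

namespace IsDisjointSystem

variable {k : ℕ} {a : Fin k → ℤ} {m : Fin k → ℕ}

theorem of_gcd_eq (h : IsDisjointSystem k a m) {m' : Fin k → ℕ} (hpos : ∀ i, 0 < m' i)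
    (hgcd : ∀ i j, i ≠ j → (m' i).gcd (m' j) = (m i).gcd (m j)) :
    IsDisjointSystem k a m' where
  pos := hpos
  disjoint i j hij := by
    rw [congClass_disjoint_iff, hgcd i j hij, ← congClass_disjoint_iff]
    exact h.disjoint i j hij
  gcd_lt i j hij := hgcd i j hij ▸ h.gcd_lt i j hij

theorem exists_ne_pow_dvd_of_sum_minimal (h : IsDisjointSystem k a m)
    (hmin : ∀ a' m', IsDisjointSystem k a' m' → ∑ i, m i ≤ ∑ i, m' i)
    {i : Fin k} {p e : ℕ} (hp : p.Prime) (he : 0 < e) (hpe : p ^ e ∣ m i) :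
    ∃ j, j ≠ i ∧ p ^ e ∣ m j := by
  by_contra! hne
  have hpi : p ∣ m i := (dvd_pow_self p he.ne').trans hpe
  have hpos : ∀ j, 0 < update m i (m i / p) j :=
    (forall_update_iff m fun _ x => 0 < x).mpr
      ⟨Nat.div_pos (Nat.le_of_dvd (h.pos i) hpi) hp.pos, fun j _ => h.pos j⟩
  have hsys := h.of_gcd_eq hpos fun _ _ => gcd_update_div_prime hp hpe hne
  have hlt : ∑ j, update m i (m i / p) j < ∑ j, m j := by
    refine Finset.sum_lt_sum (fun j _ => ?_) ⟨i, mem_univ i, ?_⟩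
    · rcases eq_or_ne j i with rfl | hj
      · simpa only [update_self] using Nat.div_le_self _ p
      · rw [update_of_ne hj]
    · simpa only [update_self] using Nat.div_lt_self (h.pos i) hp.one_lt
  exact (hmin a _ hsys).not_gt hlt

theorem dvd_Nval_of_sum_minimal (h : IsDisjointSystem k a m)
    (hmin : ∀ a' m', IsDisjointSystem k a' m' → ∑ i, m i ≤ ∑ i, m' i) (i : Fin k) :
    m i ∣ Nval k m := by
  refine (Nat.dvd_iff_prime_pow_dvd_dvd _ _).mpr fun p e hp hpe => ?_
  rcases e.eq_zero_or_pos with rfl | he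
  · simp
  obtain ⟨j, hji, hpj⟩ := h.exists_ne_pow_dvd_of_sum_minimal hmin hp he hpe
  exact (Nat.dvd_gcd hpe hpj).trans (gcd_dvd_Nval m hji.symm)

theorem Nval_dvd_lcm_Icc (h : IsDisjointSystem k a m) :
    Nval k m ∣ (Icc 1 (k - 1)).lcm id := by
  refine Finset.lcm_dvd fun q hq => Finset.dvd_lcm (mem_Icc.mpr ⟨?_, ?_⟩)
  · exact Nat.gcd_pos_of_pos_left _ (h.pos q.1)
  · have := h.gcd_lt q.1 q.2 (mem_filter.mp hq).2.ne
    omega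

end IsDisjointSystem

theorem min_ce_dvd_N_general (k : ℕ) (a : Fin k → ℤ) (m : Fin k → ℕ)
    (hm : ∀ i, 0 < m i)
    (hdisj : ∀ i j, i ≠ j → Disjoint (congClass (a i) (m i)) (congClass (a j) (m j)))
    (hgcd : ∀ i j, i ≠ j → Nat.gcd (m i) (m j) < k)
    (hsummin : ∀ (a' : Fin k → ℤ) (m' : Fin k → ℕ),
      (∀ i, 0 < m' i) →
      (∀ i j, i ≠ j → Disjoint (congClass (a' i) (m' i)) (congClass (a' j) (m' j))) →
      (∀ i j, i ≠ j → Nat.gcd (m' i) (m' j) < k) →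
      ∑ i, m i ≤ ∑ i, m' i) :
    (∀ i, m i ∣ Nval k m) ∧ Nval k m ∣ (Finset.Icc 1 (k - 1)).lcm id ∧
      Nval k m = Finset.univ.lcm m := by
  have hsys : IsDisjointSystem k a m := ⟨hm, hdisj, hgcd⟩
  have hdvd : ∀ i, m i ∣ Nval k m :=
    hsys.dvd_Nval_of_sum_minimal fun a' m' h => hsummin a' m' h.pos h.disjoint h.gcd_lt
  exact ⟨hdvd, hsys.Nval_dvd_lcm_Icc,
    (Nval_dvd_lcm m).antisymm (Finset.lcm_dvd fun i _ => hdvd i)⟩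

theorem min_ce_dvd_N (k : ℕ) (a : Fin k → ℤ) (m : Fin k → ℕ)
    (hk : 2 ≤ k)
    (hm : ∀ i, 0 < m i)
    (hdisj : ∀ i j, i ≠ j → Disjoint (congClass (a i) (m i)) (congClass (a j) (m j)))
    (hgcd : ∀ i j, i ≠ j → Nat.gcd (m i) (m j) < k)
    (hkmin : ∀ k', 2 ≤ k' → IsCounterexample k' → k ≤ k')
    (hsummin : ∀ (a' : Fin k → ℤ) (m' : Fin k → ℕ),
      (∀ i, 0 < m' i) →
      (∀ i j, i ≠ j → Disjoint (congClass (a' i) (m' i)) (congClass (a' j) (m' j))) →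
      (∀ i j, i ≠ j → Nat.gcd (m' i) (m' j) < k) →
      ∑ i, m i ≤ ∑ i, m' i) :
    (∀ i, m i ∣ Nval k m) ∧ Nval k m ∣ (Finset.Icc 1 (k - 1)).lcm id ∧
      Nval k m = Finset.univ.lcm m :=
  min_ce_dvd_N_general k a m hm hdisj hgcd hsummin
end

section
/- Assume the minimal-counterexample hypothesis. Then for every index i, the modulus m_i is not a prime power; that is, m_i is divisible by at least two distinct primes. -/
/-!
If some modulus `m i` were a power of a prime `p`, then, since coprime classes always meet
(Chinese remainder theorem), every modulus would share a factor with `m i` and hence be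
divisible by `p`; moreover `p < k`. By pigeonhole some residue `r` mod `p` contains at least
`k / p` of the `a j`. The classes with `a j ≡ r (mod p)` lie inside `r + pℤ`, and pulling them
back along `y ↦ r + p y` gives disjoint classes modulo `m j / p` whose pairwise gcds drop by
the factor `p`, hence below `k / p`. If all `k` classes qualify this is a counterexample of
smaller modulus sum; otherwise it is a counterexample with fewer than `k` (but at least two)
classes. Either way minimality is violated.
-/

open Finset

lemma Fintype.exists_card_le_mul_card_fiber {α β : Type*} [Fintype α] [Fintype β] [Nonempty β]
    [DecidableEq β] (f : α → β) : ∃ y, Fintype.card α ≤ Fintype.card β * #{x | f x = y} := by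
  have hsum : ∑ _y : β, Fintype.card α ≤ ∑ y : β, Fintype.card β * #{x | f x = y} := by
    rw [← mul_sum, ← card_eq_sum_card_fiberwise (fun x _ => mem_coe.2 (mem_univ (f x))),
      sum_const, card_univ, smul_eq_mul, card_univ]
  obtain ⟨y, -, hy⟩ := exists_le_of_sum_le univ_nonempty hsum
  exact ⟨y, hy⟩

lemma Nat.exists_two_primes_dvd_of_not_isPrimePow {n : ℕ} (hn : n ≠ 1) (h : ¬IsPrimePow n) :
    ∃ p q : ℕ, p.Prime ∧ q.Prime ∧ p ≠ q ∧ p ∣ n ∧ q ∣ n := by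
  obtain ⟨p, hp, hpn⟩ := Nat.exists_prime_and_dvd hn
  rw [isPrimePow_iff_unique_prime_dvd] at h
  obtain ⟨q, ⟨hq, hqn⟩, hqp⟩ : ∃ q, (q.Prime ∧ q ∣ n) ∧ q ≠ p := by
    by_contra! hne
    exact h ⟨p, ⟨hp, hpn⟩, fun q hq => hne q hq⟩
  exact ⟨p, q, hp, hq, hqp.symm, hpn, hqn⟩

lemma mem_congClass {a x : ℤ} {m : ℕ} : x ∈ congClass a m ↔ (m : ℤ) ∣ a - x :=
  Int.modEq_iff_dvd

lemma not_disjoint_congClass_of_coprime {m n : ℕ} (h : Nat.Coprime m n) (a b : ℤ) :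
    ¬Disjoint (congClass a m) (congClass b n) := by
  obtain ⟨u, v, huv⟩ := Nat.isCoprime_iff_coprime.2 h
  rw [Set.not_disjoint_iff]
  refine ⟨a + u * m * (b - a), mem_congClass.2 ⟨u * (a - b), by ring⟩,
    mem_congClass.2 ⟨v * (b - a), ?_⟩⟩
  linear_combination (a - b) * huv

lemma preimage_affine_congClass {a r : ℤ} {m p : ℕ} (hp : p ≠ 0) (hpm : p ∣ m)
    (hpa : (p : ℤ) ∣ a - r) :
    (fun y => r + p * y) ⁻¹' congClass a m = congClass ((a - r) / p) (m / p) := by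
  obtain ⟨n, rfl⟩ := hpm
  obtain ⟨c, hc⟩ := hpa
  have hp' : (p : ℤ) ≠ 0 := by exact_mod_cast hp
  ext y
  rw [Set.mem_preimage, mem_congClass, mem_congClass, hc, Int.mul_ediv_cancel_left _ hp',
    Nat.mul_div_cancel_left _ (Nat.pos_of_ne_zero hp), show a - (r + p * y) = p * (c - y) by
      linear_combination hc, Nat.cast_mul, mul_dvd_mul_iff_left hp']

def IsDisjointSystem_s11 {ι : Type*} (a : ι → ℤ) (m : ι → ℕ) (g : ℕ) : Prop :=
  (∀ i, 0 < m i) ∧ Pairwise (fun i j => Disjoint (congClass (a i) (m i)) (congClass (a j) (m j))) ∧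
    Pairwise (fun i j => Nat.gcd (m i) (m j) < g)

namespace IsDisjointSystem_s11

variable {ι : Type*} {a : ι → ℤ} {m : ι → ℕ} {g : ℕ}

lemma not_coprime (hs : IsDisjointSystem_s11 a m g) {i j : ι} (hij : i ≠ j) :
    ¬Nat.Coprime (m i) (m j) :=
  fun h => not_disjoint_congClass_of_coprime h _ _ (hs.2.1 hij)

lemma prime_dvd_of_eq_pow (hs : IsDisjointSystem_s11 a m g) {p e : ℕ} {i : ι} (hp : p.Prime)
    (he : e ≠ 0) (hi : m i = p ^ e) (j : ι) : p ∣ m j := by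
  by_cases hji : j = i
  · rw [hji, hi]
    exact dvd_pow_self p he
  · by_contra hpj
    exact hs.not_coprime (Ne.symm hji) (hi ▸ ((hp.coprime_iff_not_dvd.2 hpj).pow_left e))

lemma comp {κ : Type*} (hs : IsDisjointSystem_s11 a m g) {e : κ → ι} (he : Function.Injective e) :
    IsDisjointSystem_s11 (a ∘ e) (m ∘ e) g :=
  ⟨fun i => hs.1 (e i), hs.2.1.comp_of_injective he, hs.2.2.comp_of_injective he⟩

lemma scale (hs : IsDisjointSystem_s11 a m g) {p g' : ℕ} {r : ℤ} (hp : 0 < p) (hpm : ∀ i, p ∣ m i)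
    (hpa : ∀ i, (p : ℤ) ∣ a i - r) (hg : g ≤ p * g') :
    IsDisjointSystem_s11 (fun i => (a i - r) / p) (fun i => m i / p) g' := by
  refine ⟨fun i => Nat.div_pos (Nat.le_of_dvd (hs.1 i) (hpm i)) hp, fun i j hij => ?_,
    fun i j hij => ?_⟩
  · simpa only [preimage_affine_congClass hp.ne' (hpm _) (hpa _)] using
      (hs.2.1 hij).preimage (fun y => r + p * y)
  · dsimp only
    rw [Nat.gcd_div (hpm i) (hpm j), Nat.div_lt_iff_lt_mul hp]
    have := hs.2.2 hij
    linarith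

lemma isCounterexample [Fintype ι] (hs : IsDisjointSystem_s11 a m (Fintype.card ι)) :
    IsCounterexample (Fintype.card ι) := by
  obtain ⟨hm, hdisj, hgcd⟩ := hs.comp (Fintype.equivFin ι).symm.injective
  exact ⟨_, _, hm, fun i j => @hdisj i j, fun i j => @hgcd i j⟩

lemma exists_smaller_of_prime_dvd [Fintype ι] (hs : IsDisjointSystem_s11 a m (Fintype.card ι))
    {p : ℕ} (hp : p.Prime) (hpm : ∀ i, p ∣ m i) (hpk : p < Fintype.card ι) :
    (∃ k, 2 ≤ k ∧ k < Fintype.card ι ∧ IsCounterexample k) ∨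
      ∃ (a' : ι → ℤ) (m' : ι → ℕ), IsDisjointSystem_s11 a' m' (Fintype.card ι) ∧
        ∑ i, m' i < ∑ i, m i := by
  have := Fact.mk hp
  obtain ⟨r, hr⟩ := Fintype.exists_card_le_mul_card_fiber fun i => (a i : ZMod p)
  rw [ZMod.card] at hr
  set S : Finset ι := {i | (a i : ZMod p) = r}
  have hpa : ∀ i ∈ S, (p : ℤ) ∣ a i - (r.val : ℤ) := fun i hi => by
    rw [← ZMod.intCast_eq_intCast_iff_dvd_sub]
    simpa [S] using (mem_filter.1 hi).2.symm
  by_cases hS : ∀ i, i ∈ S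
  · refine .inr ⟨_, _,
      hs.scale hp.pos hpm (fun i => hpa i (hS i)) (Nat.le_mul_of_pos_left _ hp.pos),
      sum_lt_sum_of_nonempty ?_ fun i _ => Nat.div_lt_self (hs.1 i) hp.one_lt⟩
    exact univ_nonempty_iff.2 (Fintype.card_pos_iff.1 (hp.pos.trans hpk))
  · push Not at hS
    obtain ⟨i₀, hi₀⟩ := hS
    have hSk : #S < Fintype.card ι := card_lt_univ_of_notMem hi₀
    refine .inl ⟨#S, ?_, hSk, ?_⟩
    · by_contra! h
      nlinarith -- `#S ≤ 1` would force `card ι ≤ p`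
    · have := (hs.comp Subtype.val_injective).scale (g' := Fintype.card S) hp.pos
        (fun i => hpm i.1) (fun i => hpa i.1 i.2) (by rwa [Fintype.card_coe])
      rw [← Fintype.card_coe]
      exact this.isCounterexample

end IsDisjointSystem_s11

theorem min_ce_not_prime_power (k : ℕ) (a : Fin k → ℤ) (m : Fin k → ℕ)
    (hk : 2 ≤ k)
    (hm : ∀ i, 0 < m i)
    (hdisj : ∀ i j, i ≠ j → Disjoint (congClass (a i) (m i)) (congClass (a j) (m j)))
    (hgcd : ∀ i j, i ≠ j → Nat.gcd (m i) (m j) < k)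
    (hkmin : ∀ k', 2 ≤ k' → IsCounterexample k' → k ≤ k')
    (hsummin : ∀ (a' : Fin k → ℤ) (m' : Fin k → ℕ),
      (∀ i, 0 < m' i) →
      (∀ i j, i ≠ j → Disjoint (congClass (a' i) (m' i)) (congClass (a' j) (m' j))) →
      (∀ i j, i ≠ j → Nat.gcd (m' i) (m' j) < k) →
      ∑ i, m i ≤ ∑ i, m' i) :
    ∀ i, ¬ IsPrimePow (m i) ∧
      ∃ p q : ℕ, p.Prime ∧ q.Prime ∧ p ≠ q ∧ p ∣ m i ∧ q ∣ m i := by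
  have hs : IsDisjointSystem_s11 a m (Fintype.card (Fin k)) := by
    rw [Fintype.card_fin]
    exact ⟨hm, fun i j => hdisj i j, fun i j => hgcd i j⟩
  intro i
  obtain ⟨j, hji⟩ := Fintype.exists_ne_of_one_lt_card (by rw [Fintype.card_fin]; omega) i
  have hi1 : m i ≠ 1 := fun h => hs.not_coprime hji.symm (h ▸ Nat.coprime_one_left _)
  have hnpp : ¬IsPrimePow (m i) := by
    rintro ⟨p, e, hp, he, hpe⟩
    rw [← Nat.prime_iff] at hp
    have hpm := hs.prime_dvd_of_eq_pow hp he.ne' hpe.symm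
    have hpk : p < k := calc
      p ≤ Nat.gcd (m i) (m j) := Nat.le_of_dvd (Nat.gcd_pos_of_pos_left _ (hm i))
        (Nat.dvd_gcd (hpm i) (hpm j))
      _ < k := hgcd i j hji.symm
    rcases hs.exists_smaller_of_prime_dvd hp hpm (by simpa using hpk) with
      ⟨k', hk', hk'k, hce⟩ | ⟨a', m', ⟨hm', hdisj', hgcd'⟩, hlt⟩
    · simp only [Fintype.card_fin] at hk'k
      exact absurd (hkmin k' hk' hce) (not_le.2 hk'k)
    · simp only [Fintype.card_fin] at hgcd'
      exact absurd (hsummin a' m' hm' (fun i j => @hdisj' i j) (fun i j => @hgcd' i j))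
        (not_le.2 hlt)
  exact ⟨hnpp, Nat.exists_two_primes_dvd_of_not_isPrimePow hi1 hnpp⟩
end

section
/- Assume the minimal-counterexample hypothesis. If exactly three of the moduli m_1, …, m_k are multiples of k − 1, then there exist two distinct indices i, j with (k−1) ∤ m_i and (k−1) ∤ m_j such that (k−2) ∣ m_i and (k−2) ∣ m_j. -/
theorem not_disjoint_congClass_of_modEq_gcd {a b : ℤ} {m n : ℕ}
    (h : a ≡ b [ZMOD (m.gcd n : ℤ)]) : ¬ Disjoint (congClass a m) (congClass b n) := by
  obtain ⟨t, ht⟩ := h.dvd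
  have hbezout : (m.gcd n : ℤ) = m * (m : ℤ).gcdA n + n * (m : ℤ).gcdB n := by
    simpa using Int.gcd_eq_gcd_ab (m : ℤ) n
  -- the common point is a + m u t, where m u + n v = gcd m n and b - a = gcd m n * t
  set x := a + m * (m : ℤ).gcdA n * t
  have hxa : x ∈ congClass a m := Int.modEq_iff_dvd.mpr ⟨-((m : ℤ).gcdA n * t), by ring⟩
  have hxb : x ∈ congClass b n :=
    Int.modEq_iff_dvd.mpr ⟨(m : ℤ).gcdB n * t, by linear_combination ht + t * hbezout⟩
  exact fun hd => Set.disjoint_left.mp hd hxa hxb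

theorem gcd_eq_of_dvd_of_lt_succ {x y d : ℕ} (hx : 0 < x) (hdx : d ∣ x) (hdy : d ∣ y)
    (hlt : x.gcd y < d + 1) : x.gcd y = d := by
  have := Nat.le_of_dvd (Nat.gcd_pos_of_pos_left y hx) (Nat.dvd_gcd hdx hdy)
  omega

theorem gcd_lt_of_not_both_dvd {x y d : ℕ} (hlt : x.gcd y < d + 2)
    (hsucc : ¬ (d + 1 ∣ x ∧ d + 1 ∣ y)) (hd : ¬ (d ∣ x ∧ d ∣ y)) : x.gcd y < d := by
  by_contra hge
  rcases (by omega : x.gcd y = d ∨ x.gcd y = d + 1) with heq | heq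
  · exact hd (heq ▸ ⟨Nat.gcd_dvd_left x y, Nat.gcd_dvd_right x y⟩)
  · exact hsucc (heq ▸ ⟨Nat.gcd_dvd_left x y, Nat.gcd_dvd_right x y⟩)

section Families

variable {ι : Type*} (a : ι → ℤ) (m : ι → ℕ)

theorem card_le_of_pairwise_disjoint_of_gcd_dvd {s : Finset ι} {d : ℕ} (hd : 0 < d)
    (hdisj : ∀ i ∈ s, ∀ j ∈ s, i ≠ j → Disjoint (congClass (a i) (m i)) (congClass (a j) (m j)))
    (hgcd : ∀ i ∈ s, ∀ j ∈ s, i ≠ j → (m i).gcd (m j) ∣ d) :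
    s.card ≤ d := by
  have : NeZero d := ⟨hd.ne'⟩
  calc s.card ≤ (Finset.univ : Finset (ZMod d)).card := by
        refine Finset.card_le_card_of_injOn (fun i => (a i : ZMod d))
          (fun _ _ => Finset.mem_coe.mpr (Finset.mem_univ _)) fun i hi j hj hij => ?_
        by_contra hne
        refine not_disjoint_congClass_of_modEq_gcd ?_ (hdisj i hi j hj hne)
        exact ((ZMod.intCast_eq_intCast_iff _ _ _).mp hij).of_dvd
          (Int.natCast_dvd_natCast.mpr (hgcd i hi j hj hne))
    _ = d := by rw [Finset.card_univ, ZMod.card]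

theorem isCounterexample_card_of_finset {s : Finset ι} (hm : ∀ i ∈ s, 0 < m i)
    (hdisj : ∀ i ∈ s, ∀ j ∈ s, i ≠ j → Disjoint (congClass (a i) (m i)) (congClass (a j) (m j)))
    (hgcd : ∀ i ∈ s, ∀ j ∈ s, i ≠ j → (m i).gcd (m j) < s.card) :
    IsCounterexample s.card := by
  let e := s.equivFin.symm
  have he : ∀ p q, p ≠ q → (e p : ι) ≠ e q := fun p q hpq h => hpq (e.injective (Subtype.ext h))
  exact ⟨fun p => a (e p), fun p => m (e p), fun p => hm _ (e p).2,
    fun p q hpq => hdisj _ (e p).2 _ (e q).2 (he p q hpq),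
    fun p q hpq => hgcd _ (e p).2 _ (e q).2 (he p q hpq)⟩

theorem exists_mem_not_dvd_of_gcd_eq_succ {s : Finset ι} {d : ℕ} (hd : 2 ≤ d) (hs : 1 < s.card)
    (hgcd : ∀ i ∈ s, ∀ j ∈ s, i ≠ j → (m i).gcd (m j) = d + 1) :
    ∃ t ∈ s, ¬ d ∣ m t := by
  by_contra! hall
  obtain ⟨i, hi, j, hj, hij⟩ := Finset.one_lt_card.mp hs
  have hdvd : d ∣ d + 1 := hgcd i hi j hj hij ▸ Nat.dvd_gcd (hall i hi) (hall j hj)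
  have := Nat.le_of_dvd one_pos ((Nat.dvd_add_right dvd_rfl).mp hdvd)
  omega

end Families

theorem min_ce_exactly_three_general (k : ℕ) (a : Fin k → ℤ) (m : Fin k → ℕ)
    (hm : ∀ i, 0 < m i)
    (hdisj : ∀ i j, i ≠ j → Disjoint (congClass (a i) (m i)) (congClass (a j) (m j)))
    (hgcd : ∀ i j, i ≠ j → Nat.gcd (m i) (m j) < k)
    (hkmin : ∀ k', 2 ≤ k' → IsCounterexample k' → k ≤ k')
    (h3 : (Finset.univ.filter (fun i => (k - 1) ∣ m i)).card = 3) :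
    ∃ i j : Fin k, i ≠ j ∧ ¬ (k - 1) ∣ m i ∧ ¬ (k - 1) ∣ m j ∧
      (k - 2) ∣ m i ∧ (k - 2) ∣ m j := by
  obtain ⟨d, rfl⟩ : ∃ d, k = d + 2 := by
    have := h3 ▸ Finset.card_le_univ (Finset.univ.filter (fun i => (k - 1) ∣ m i))
    exact ⟨k - 2, by simp only [Fintype.card_fin] at this; omega⟩
  simp only [show d + 2 - 1 = d + 1 by omega, show d + 2 - 2 = d by omega] at h3 ⊢
  set S := Finset.univ.filter (fun i => (d + 1) ∣ m i)
  have hS : ∀ i ∈ S, ∀ j ∈ S, i ≠ j → (m i).gcd (m j) = d + 1 := fun i hi j hj hij =>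
    gcd_eq_of_dvd_of_lt_succ (hm i) (Finset.mem_filter.mp hi).2 (Finset.mem_filter.mp hj).2
      (hgcd i j hij)
  have hd : 2 ≤ d := by
    have := h3 ▸ card_le_of_pairwise_disjoint_of_gcd_dvd a m d.succ_pos
      (fun i _ j _ => hdisj i j) fun i hi j hj hij => (hS i hi j hj hij).dvd
    omega
  obtain ⟨t, htS, ht⟩ := exists_mem_not_dvd_of_gcd_eq_succ m hd (by omega) hS
  by_contra! hcon
  set R := Finset.univ \ S.erase t
  have hR_mem : ∀ i ∈ R, (d + 1) ∣ m i → i = t := fun i hi hdvd => by_contra fun hit =>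
    (Finset.mem_sdiff.mp hi).2 (Finset.mem_erase.mpr ⟨hit, Finset.mem_filter.mpr ⟨by simp, hdvd⟩⟩)
  have hR_card : R.card = d := by
    rw [Finset.card_univ_sdiff, Fintype.card_fin, Finset.card_erase_of_mem htS, h3]
    omega
  have hR_gcd : ∀ i ∈ R, ∀ j ∈ R, i ≠ j → (m i).gcd (m j) < R.card := by
    intro i hi j hj hij
    have hnot : ∀ l ∈ R, d ∣ m l → ¬ (d + 1) ∣ m l :=
      fun l hl hl2 hl1 => ht (hR_mem l hl hl1 ▸ hl2)
    rw [hR_card]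
    refine gcd_lt_of_not_both_dvd (hgcd i j hij) ?_ ?_
    · rintro ⟨hi1, hj1⟩
      exact hij ((hR_mem i hi hi1).trans (hR_mem j hj hj1).symm)
    · rintro ⟨hi0, hj0⟩
      exact hcon i j hij (hnot i hi hi0) (hnot j hj hj0) hi0 hj0
  have := hkmin _ (hR_card.symm ▸ hd) (isCounterexample_card_of_finset a m (fun i _ => hm i)
    (fun i _ j _ => hdisj i j) hR_gcd)
  omega

theorem min_ce_exactly_three (k : ℕ) (a : Fin k → ℤ) (m : Fin k → ℕ)
    (hk : 2 ≤ k)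
    (hm : ∀ i, 0 < m i)
    (hdisj : ∀ i j, i ≠ j → Disjoint (congClass (a i) (m i)) (congClass (a j) (m j)))
    (hgcd : ∀ i j, i ≠ j → Nat.gcd (m i) (m j) < k)
    (hkmin : ∀ k', 2 ≤ k' → IsCounterexample k' → k ≤ k')
    (hsummin : ∀ (a' : Fin k → ℤ) (m' : Fin k → ℕ),
      (∀ i, 0 < m' i) →
      (∀ i j, i ≠ j → Disjoint (congClass (a' i) (m' i)) (congClass (a' j) (m' j))) →
      (∀ i j, i ≠ j → Nat.gcd (m' i) (m' j) < k) →
      ∑ i, m i ≤ ∑ i, m' i)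
    (h3 : (Finset.univ.filter (fun i => (k - 1) ∣ m i)).card = 3) :
    ∃ i j : Fin k, i ≠ j ∧ ¬ (k - 1) ∣ m i ∧ ¬ (k - 1) ∣ m j ∧
      (k - 2) ∣ m i ∧ (k - 2) ∣ m j :=
  min_ce_exactly_three_general k a m hm hdisj hgcd hkmin h3
end

section
/- Assume the minimal-counterexample hypothesis. Then for every subset {h_1, …, h_ℓ} of {m_1, …, m_k} with ℓ ≥ 2, and every positive multiple M of lcm{gcd(h_i, h_j) : 1 ≤ i < j ≤ ℓ}, one has Σ_{i=1}^{ℓ} 1/gcd(h_i, M) ≤ 1 (as a sum of rationals). -/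
/-!
Two classes `a (mod m)` and `b (mod n)` are disjoint exactly when `gcd(m, n) ∤ a - b` (Chinese
remainder theorem). Since every pairwise `gcd(h_i, h_j)` divides `M`, and hence divides
`gcd(gcd(h_i, M), gcd(h_j, M))`, the coarser classes `a_i (mod gcd(h_i, M))` are still pairwise
disjoint. Disjoint classes with moduli `d_i` occupy `L / d_i` disjoint residues in `[0, L)` for
`L = lcm d_i`, so their densities `1 / d_i` sum to at most `1`.
-/

open Finset

theorem disjoint_congClass_iff {a b : ℤ} {m n : ℕ} :
    Disjoint (congClass a m) (congClass b n) ↔ ¬ (m.gcd n : ℤ) ∣ a - b := by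
  rw [← not_iff_not, not_not, Set.not_disjoint_iff]
  constructor
  · rintro ⟨x, hxa, hxb⟩
    have hm : (m.gcd n : ℤ) ∣ a - x :=
      (Int.natCast_dvd_natCast.mpr (Nat.gcd_dvd_left m n)).trans hxa.dvd
    have hn : (m.gcd n : ℤ) ∣ x - b :=
      (Int.natCast_dvd_natCast.mpr (Nat.gcd_dvd_right m n)).trans hxb.symm.dvd
    simpa using dvd_add hm hn
  · rintro ⟨t, ht⟩
    refine ⟨a - m * m.gcdA n * t, ?_, ?_⟩
    · exact Int.modEq_iff_dvd.mpr ⟨m.gcdA n * t, by ring⟩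
    · refine Int.modEq_iff_dvd.mpr ⟨-(m.gcdB n * t), ?_⟩
      linear_combination -ht - t * Nat.gcd_eq_gcd_ab m n

theorem Disjoint.congClass_of_gcd_dvd {a b : ℤ} {m n d e : ℕ}
    (h : Disjoint (congClass a m) (congClass b n)) (hd : m.gcd n ∣ d) (he : m.gcd n ∣ e) :
    Disjoint (congClass a d) (congClass b e) := by
  rw [disjoint_congClass_iff] at h ⊢
  exact fun hde => h ((Int.natCast_dvd_natCast.mpr (Nat.dvd_gcd hd he)).trans hde)

theorem card_Ico_filter_modEq_of_dvd {d L : ℕ} (hd : 0 < d) (hdL : d ∣ L) (a : ℤ) :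
    #{x ∈ Ico (0 : ℤ) L | x ≡ a [ZMOD d]} = L / d := by
  obtain ⟨q, rfl⟩ := hdL
  have hsplit : ((((d * q : ℕ) : ℤ) : ℚ) - a) / ((d : ℤ) : ℚ) =
      ((q : ℤ) : ℚ) + (0 - a) / ((d : ℤ) : ℚ) := by
    have : (d : ℚ) ≠ 0 := by positivity
    push_cast; field_simp; ring
  have := Int.Ico_filter_modEq_card 0 (d * q : ℕ) (Int.natCast_pos.mpr hd) a
  rw [Int.cast_zero, hsplit, Int.ceil_intCast_add, add_sub_cancel_right,
    max_eq_left (Int.natCast_nonneg q)] at this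
  rw [Nat.mul_div_cancel_left q hd]
  exact_mod_cast this

theorem sum_one_div_le_one_of_pairwiseDisjoint {ι : Type*} {s : Finset ι} {a : ι → ℤ}
    {d : ι → ℕ} (hd : ∀ i ∈ s, 0 < d i)
    (hdisj : (s : Set ι).PairwiseDisjoint fun i => congClass (a i) (d i)) :
    ∑ i ∈ s, (1 : ℚ) / d i ≤ 1 := by
  set L := s.lcm d
  have hL : 0 < L := Nat.pos_of_ne_zero fun h =>
    have ⟨i, hi, hi0⟩ := lcm_eq_zero_iff.mp h
    (hd i hi).ne' hi0
  have hdL : ∀ i ∈ s, d i ∣ L := fun i hi => dvd_lcm hi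
  let T : ι → Finset ℤ := fun i => {x ∈ Ico (0 : ℤ) L | x ≡ a i [ZMOD d i]}
  have hT : (s : Set ι).PairwiseDisjoint T := fun i hi j hj hij =>
    disjoint_left.mpr fun x hxi hxj =>
      Set.disjoint_left.mp (hdisj hi hj hij) (mem_filter.mp hxi).2 (mem_filter.mp hxj).2
  have hcount : ∑ i ∈ s, L / d i ≤ L := by
    calc ∑ i ∈ s, L / d i = #(s.biUnion T) := by
          rw [card_biUnion hT]
          exact sum_congr rfl fun i hi =>
            (card_Ico_filter_modEq_of_dvd (hd i hi) (hdL i hi) _).symm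
      _ ≤ #(Ico (0 : ℤ) L) := card_le_card (biUnion_subset.mpr fun i _ => filter_subset _ _)
      _ = L := by simp
  calc ∑ i ∈ s, (1 : ℚ) / d i = (∑ i ∈ s, L / d i : ℕ) / L := by
        push_cast
        rw [sum_div]
        refine sum_congr rfl fun i hi => ?_
        rw [Nat.cast_div (hdL i hi) (by exact_mod_cast (hd i hi).ne')]
        field_simp
    _ ≤ 1 := by
        rw [div_le_one (by positivity)]
        exact_mod_cast hcount

theorem gcd_dvd_lcm_filter_lt {ι : Type*} [LinearOrder ι] {s : Finset ι} (f : ι → ℕ)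
    {i j : ι} (hi : i ∈ s) (hj : j ∈ s) (hij : i ≠ j) :
    (f i).gcd (f j) ∣
      ((s ×ˢ s).filter (fun p => p.1 < p.2)).lcm (fun p => (f p.1).gcd (f p.2)) := by
  rcases hij.lt_or_gt with h | h
  · exact dvd_lcm (f := fun p : ι × ι => (f p.1).gcd (f p.2)) (b := (i, j))
      (by simp [hi, hj, h])
  · rw [Nat.gcd_comm]
    exact dvd_lcm (f := fun p : ι × ι => (f p.1).gcd (f p.2)) (b := (j, i))
      (by simp [hi, hj, h])

theorem min_ce_subset_test_general (k : ℕ) (a : Fin k → ℤ) (m : Fin k → ℕ)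
    (hdisj : ∀ i j, i ≠ j → Disjoint (congClass (a i) (m i)) (congClass (a j) (m j)))
    (s : Finset (Fin k)) (M : ℕ) (hM : 0 < M)
    (hdvd : (((s ×ˢ s).filter (fun p => p.1 < p.2)).lcm
        (fun p => Nat.gcd (m p.1) (m p.2))) ∣ M) :
    ∑ i ∈ s, (1 : ℚ) / (Nat.gcd (m i) M) ≤ 1 := by
  refine sum_one_div_le_one_of_pairwiseDisjoint (a := a)
    (fun i _ => Nat.gcd_pos_of_pos_right _ hM) ?_
  intro i hi j hj hij
  have hgM : (m i).gcd (m j) ∣ M := (gcd_dvd_lcm_filter_lt m hi hj hij).trans hdvd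
  exact (hdisj i j hij).congClass_of_gcd_dvd (Nat.dvd_gcd (Nat.gcd_dvd_left _ _) hgM)
    (Nat.dvd_gcd (Nat.gcd_dvd_right _ _) hgM)

theorem min_ce_subset_test (k : ℕ) (a : Fin k → ℤ) (m : Fin k → ℕ)
    (hk : 2 ≤ k)
    (hm : ∀ i, 0 < m i)
    (hdisj : ∀ i j, i ≠ j → Disjoint (congClass (a i) (m i)) (congClass (a j) (m j)))
    (hgcd : ∀ i j, i ≠ j → Nat.gcd (m i) (m j) < k)
    (hkmin : ∀ k', 2 ≤ k' → IsCounterexample k' → k ≤ k')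
    (hsummin : ∀ (a' : Fin k → ℤ) (m' : Fin k → ℕ),
      (∀ i, 0 < m' i) →
      (∀ i j, i ≠ j → Disjoint (congClass (a' i) (m' i)) (congClass (a' j) (m' j))) →
      (∀ i j, i ≠ j → Nat.gcd (m' i) (m' j) < k) →
      ∑ i, m i ≤ ∑ i, m' i)
    (s : Finset (Fin k)) (hs : 2 ≤ s.card) (M : ℕ) (hM : 0 < M)
    (hdvd : (((s ×ˢ s).filter (fun p => p.1 < p.2)).lcm
        (fun p => Nat.gcd (m p.1) (m p.2))) ∣ M) :
    ∑ i ∈ s, (1 : ℚ) / (Nat.gcd (m i) M) ≤ 1 :=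
  min_ce_subset_test_general k a m hdisj s M hM hdvd
end

section
/- Assume the minimal-counterexample hypothesis. Then k is not an element of {8, 12, 14, 18, 20, 24, 30}. -/
open Finset

theorem card_add_card_le_of_injOn {ι α β : Type*} [DecidableEq α] {s : Finset ι}
    {U R : Finset α} {V : Finset β} {f : ι → α} {g : ι → β} (hRU : R ⊆ U)
    (hf : ∀ j ∈ s, f j ∈ U) (hg : ∀ j ∈ s, g j ∈ V)
    (hfg : Set.InjOn (fun j => (f j, g j)) s) (hfR : Set.InjOn f {j ∈ s | f j ∉ R}) :
    #s + #R ≤ #U + #R * #V := by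
  have hin : #{j ∈ s | f j ∈ R} ≤ #R * #V := by
    rw [← card_product]
    refine card_le_card_of_injOn _ (fun j hj => ?_) (hfg.mono fun j hj => (mem_filter.1 hj).1)
    rw [mem_coe, mem_filter] at hj
    exact mem_coe.2 (mem_product.2 ⟨hj.2, hg j hj.1⟩)
  have hout : #{j ∈ s | f j ∉ R} ≤ #(U \ R) := by
    refine card_le_card_of_injOn f (fun j hj => ?_) (by simpa using hfR)
    rw [mem_coe, mem_filter] at hj
    exact mem_coe.2 (mem_sdiff.2 ⟨hf j hj.1, hj.2⟩)
  have := card_sdiff_add_card_eq_card hRU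
  have := card_filter_add_card_filter_not (s := s) (fun j => f j ∈ R)
  omega

theorem exists_three_of_pairwiseDisjoint {ι α : Type*} [DecidableEq ι] {s : Finset ι}
    {B : ι → Finset α} (hs : 3 ≤ #s) (hB : (s : Set ι).PairwiseDisjoint B) (x : α) :
    ∃ i₁ ∈ s, ∃ i₂ ∈ s, ∃ i₃ ∈ s, i₁ ≠ i₂ ∧ i₁ ≠ i₃ ∧ i₂ ≠ i₃ ∧ x ∉ B i₁ ∧ x ∉ B i₂ := by
  classical
  have hx : #{i ∈ s | x ∈ B i} ≤ 1 := card_le_one.2 fun i hi i' hi' => by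
    rw [mem_filter] at hi hi'
    by_contra hne
    exact disjoint_left.1 (hB hi.1 hi'.1 hne) hi.2 hi'.2
  have := card_filter_add_card_filter_not (s := s) (fun i => x ∈ B i)
  obtain ⟨i₁, hi₁, i₂, hi₂, h₁₂⟩ := one_lt_card.1 (by omega : 1 < #{i ∈ s | x ∉ B i})
  rw [mem_filter] at hi₁ hi₂
  obtain ⟨i₃, hi₃⟩ : ((s.erase i₁).erase i₂).Nonempty := by
    rw [← card_pos, card_erase_of_mem (mem_erase.2 ⟨h₁₂.symm, hi₂.1⟩), card_erase_of_mem hi₁.1]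
    omega
  simp only [mem_erase] at hi₃
  exact ⟨i₁, hi₁.1, i₂, hi₂.1, i₃, hi₃.2.2, h₁₂, hi₃.2.1.symm, hi₃.1.symm, hi₁.2, hi₂.2⟩

theorem odd_prime_pair_of_mul_lt_thirty {u v : ℕ} (hu : u.Prime) (hv : v.Prime) (hu2 : u ≠ 2)
    (hv2 : v ≠ 2) (huv : u ≠ v) (h : u * v < 30) :
    (u = 3 ∧ (v = 5 ∨ v = 7)) ∨ (v = 3 ∧ (u = 5 ∨ u = 7)) := by
  have hu3 : 3 ≤ u := by have := hu.two_le; omega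
  have hv3 : 3 ≤ v := by have := hv.two_le; omega
  have hu9 : u ≤ 9 := by nlinarith
  have hv9 : v ≤ 9 := by nlinarith
  interval_cases u <;> interval_cases v <;> revert hu hv huv h <;> norm_num

theorem thirty_le_mul_mul {u v w : ℕ} (hu : u.Prime) (hv : v.Prime) (hw : w.Prime) (hu2 : u ≠ 2)
    (hv2 : v ≠ 2) (huv : u ≠ v) : 30 ≤ u * v * w := by
  have := hw.two_le
  by_cases h : u * v < 30
  · rcases odd_prime_pair_of_mul_lt_thirty hu hv hu2 hv2 huv h with
      ⟨rfl, rfl | rfl⟩ | ⟨rfl, rfl | rfl⟩ <;> omega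
  · nlinarith

theorem card_filter_mul_lt_thirty_le_two {B₁ B₂ : Finset ℕ} (h : Disjoint B₁ B₂)
    (hB₁ : ∀ x ∈ B₁, x.Prime) (hB₂ : ∀ x ∈ B₂, x.Prime) (h2₁ : 2 ∉ B₁) (h2₂ : 2 ∉ B₂) :
    #{c ∈ B₁ ×ˢ B₂ | c.1 * c.2 < 30} ≤ 2 := by
  have hsub : {c ∈ B₁ ×ˢ B₂ | c.1 * c.2 < 30} ⊆
      if 3 ∈ B₁ then {(3, 5), (3, 7)} else {(5, 3), (7, 3)} := by
    rintro ⟨x, y⟩ hc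
    simp only [mem_filter, mem_product] at hc
    obtain ⟨⟨hx, hy⟩, hlt⟩ := hc
    have hxy : x ≠ y := fun he => disjoint_left.1 h hx (he ▸ hy)
    rcases odd_prime_pair_of_mul_lt_thirty (hB₁ x hx) (hB₂ y hy) (ne_of_mem_of_not_mem hx h2₁)
      (ne_of_mem_of_not_mem hy h2₂) hxy hlt with ⟨rfl, rfl | rfl⟩ | ⟨rfl, rfl | rfl⟩
    · simp [if_pos hx]
    · simp [if_pos hx]
    · simp [if_neg (disjoint_right.1 h hy)]
    · simp [if_neg (disjoint_right.1 h hy)]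
  exact (card_le_card hsub).trans (by split_ifs <;> exact card_le_two)

theorem card_add_two_le_of_gcd_lt_thirty {ι : Type*} {T : Finset ι} {n f₁ f₂ f₃ : ι → ℕ}
    {B₁ B₂ B₃ : Finset ℕ} (hn : ∀ j ∈ T, 0 < n j)
    (hgcd : ∀ j ∈ T, ∀ j' ∈ T, j ≠ j' → (n j).gcd (n j') < 30)
    (hf₁ : ∀ j ∈ T, f₁ j ∈ B₁ ∧ f₁ j ∣ n j) (hf₂ : ∀ j ∈ T, f₂ j ∈ B₂ ∧ f₂ j ∣ n j)
    (hf₃ : ∀ j ∈ T, f₃ j ∈ B₃ ∧ f₃ j ∣ n j)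
    (hB₁ : ∀ x ∈ B₁, x.Prime) (hB₂ : ∀ x ∈ B₂, x.Prime) (hB₃ : ∀ x ∈ B₃, x.Prime)
    (h2₁ : 2 ∉ B₁) (h2₂ : 2 ∉ B₂)
    (h₁₂ : Disjoint B₁ B₂) (h₁₃ : Disjoint B₁ B₃) (h₂₃ : Disjoint B₂ B₃) (hB₃ne : B₃.Nonempty) :
    #T + 2 ≤ #B₁ * #B₂ + 2 * #B₃ := by
  -- The pairs `(f₁ j, f₂ j)` with `f₁ j * f₂ j < 30` are the only ones shared by two `j`,
  -- and within them `f₃` separates, as `30 ≤ f₁ j * f₂ j * f₃ j`.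
  have hlt : ∀ j ∈ T, ∀ j' ∈ T, j ≠ j' → ∀ d, d ∣ n j → d ∣ n j' → d < 30 :=
    fun j hj j' hj' hjj' d hd hd' => (Nat.le_of_dvd (Nat.gcd_pos_of_pos_left _ (hn j hj))
      (Nat.dvd_gcd hd hd')).trans_lt (hgcd j hj j' hj' hjj')
  have hcop : ∀ {x y : ℕ} {B B' : Finset ℕ}, Disjoint B B' → (∀ x ∈ B, x.Prime) →
      (∀ y ∈ B', y.Prime) → x ∈ B → y ∈ B' → x.Coprime y := fun h hB hB' hx hy =>
    (Nat.coprime_primes (hB _ hx) (hB' _ hy)).2 fun he => disjoint_left.1 h hx (he ▸ hy)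
  have hpair : ∀ j ∈ T, f₁ j * f₂ j ∣ n j := fun j hj =>
    (hcop h₁₂ hB₁ hB₂ (hf₁ j hj).1 (hf₂ j hj).1).mul_dvd_of_dvd_of_dvd (hf₁ j hj).2 (hf₂ j hj).2
  have htriple : ∀ j ∈ T, f₁ j * f₂ j * f₃ j ∣ n j := fun j hj =>
    (Nat.Coprime.mul_left (hcop h₁₃ hB₁ hB₃ (hf₁ j hj).1 (hf₃ j hj).1)
      (hcop h₂₃ hB₂ hB₃ (hf₂ j hj).1 (hf₃ j hj).1)).mul_dvd_of_dvd_of_dvd (hpair j hj) (hf₃ j hj).2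
  have key := card_add_card_le_of_injOn (s := T) (U := B₁ ×ˢ B₂) (V := B₃)
    (R := {c ∈ B₁ ×ˢ B₂ | c.1 * c.2 < 30}) (f := fun j => (f₁ j, f₂ j)) (g := f₃)
    (filter_subset _ _) (fun j hj => mem_product.2 ⟨(hf₁ j hj).1, (hf₂ j hj).1⟩)
    (fun j hj => (hf₃ j hj).1) ?_ ?_
  · have hR := card_filter_mul_lt_thirty_le_two h₁₂ hB₁ hB₂ h2₁ h2₂
    have := hB₃ne.card_pos
    rw [card_product] at key
    nlinarith
  · intro j hj j' hj' he
    simp only [Prod.mk.injEq] at he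
    obtain ⟨⟨e₁, e₂⟩, e₃⟩ := he
    by_contra hjj'
    have h30 := thirty_le_mul_mul (hB₁ _ (hf₁ j hj).1) (hB₂ _ (hf₂ j hj).1) (hB₃ _ (hf₃ j hj).1)
      (ne_of_mem_of_not_mem (hf₁ j hj).1 h2₁) (ne_of_mem_of_not_mem (hf₂ j hj).1 h2₂)
      fun h => disjoint_left.1 h₁₂ (hf₁ j hj).1 (h ▸ (hf₂ j hj).1)
    have := hlt j hj j' hj' hjj' _ (htriple j hj) (by rw [e₁, e₂, e₃]; exact htriple j' hj')
    omega
  · rintro j ⟨hj, hjR⟩ j' ⟨hj', -⟩ he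
    simp only [Prod.mk.injEq] at he
    obtain ⟨e₁, e₂⟩ := he
    by_contra hjj'
    have := hlt j hj j' hj' hjj' _ (hpair j hj) (by rw [e₁, e₂]; exact hpair j' hj')
    exact hjR (mem_filter.2 ⟨mem_product.2 ⟨(hf₁ j hj).1, (hf₂ j hj).1⟩, this⟩)

theorem not_modEq_gcd_of_disjoint {a b : ℤ} {m n : ℕ}
    (h : Disjoint (congClass a m) (congClass b n)) : ¬ a ≡ b [ZMOD (m.gcd n : ℤ)] := by
  intro hab
  have hdvd := Int.ModEq.dvd hab
  rw [← Int.gcd_natCast_natCast, Int.coe_gcd, gcd_dvd_iff_exists] at hdvd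
  obtain ⟨u, v, huv⟩ := hdvd
  have hx : a + m * u ∈ congClass a m := Int.modEq_add_fac_self
  refine Set.disjoint_left.1 h hx ?_
  show a + m * u ≡ b [ZMOD n]
  rw [Int.modEq_iff_dvd]
  exact ⟨v, by linear_combination huv⟩

theorem two_le_gcd_of_disjoint {a b : ℤ} {m n : ℕ} (hm : 0 < m)
    (h : Disjoint (congClass a m) (congClass b n)) : 2 ≤ m.gcd n := by
  have hpos : 0 < m.gcd n := Nat.gcd_pos_of_pos_left n hm
  have hne : m.gcd n ≠ 1 := fun h1 => not_modEq_gcd_of_disjoint h (by rw [h1]; exact Int.modEq_one)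
  omega

section System

variable {ι : Type*} {a : ι → ℤ} {m : ι → ℕ}

theorem card_le_of_gcd_dvd {s : Finset ι} {n : ℕ} [NeZero n]
    (hdisj : ∀ i ∈ s, ∀ j ∈ s, i ≠ j → Disjoint (congClass (a i) (m i)) (congClass (a j) (m j)))
    (hdvd : ∀ i ∈ s, ∀ j ∈ s, i ≠ j → (m i).gcd (m j) ∣ n) : #s ≤ n := by
  calc #s ≤ #(univ : Finset (ZMod n)) := by
        refine card_le_card_of_injOn (fun i => (a i : ZMod n))
          (fun _ _ => mem_coe.2 (mem_univ _)) ?_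
        intro i hi j hj hij
        by_contra hne
        exact not_modEq_gcd_of_disjoint (hdisj i hi j hj hne)
          (((ZMod.intCast_eq_intCast_iff _ _ _).1 hij).of_dvd
            (Int.natCast_dvd_natCast.2 (hdvd i hi j hj hne)))
    _ = n := by simp

theorem isCounterexample_of_embedding {n : ℕ} (e : Fin n ↪ ι) (hm : ∀ i, 0 < m i)
    (hdisj : ∀ i j, i ≠ j → Disjoint (congClass (a i) (m i)) (congClass (a j) (m j)))
    (hgcd : ∀ i j, i ≠ j → (m (e i)).gcd (m (e j)) < n) : IsCounterexample n :=
  ⟨a ∘ e, m ∘ e, fun _ => hm _, fun _ _ hij => hdisj _ _ (e.injective.ne hij), hgcd⟩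

theorem gcd_eq_of_dvd_of_dvd {p : ℕ} {i i' : ι} (hm : ∀ i, 0 < m i)
    (hle : ∀ i j, i ≠ j → (m i).gcd (m j) ≤ p) (hii' : i ≠ i') (hi : p ∣ m i) (hi' : p ∣ m i') :
    (m i).gcd (m i') = p :=
  le_antisymm (hle i i' hii')
    (Nat.le_of_dvd (Nat.gcd_pos_of_pos_left _ (hm i)) (Nat.dvd_gcd hi hi'))

def gcdMinFacs (m : ι → ℕ) (T : Finset ι) (i : ι) : Finset ℕ :=
  T.image fun j => ((m i).gcd (m j)).minFac

theorem gcdMinFacs_subset_primesBelow {p : ℕ} {T : Finset ι} {i : ι} (hm : ∀ i, 0 < m i)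
    (hdisj : ∀ i j, i ≠ j → Disjoint (congClass (a i) (m i)) (congClass (a j) (m j)))
    (hle : ∀ i j, i ≠ j → (m i).gcd (m j) ≤ p) (hT : ∀ j ∈ T, ¬ p ∣ m j) (hi : p ∣ m i) :
    gcdMinFacs m T i ⊆ p.primesBelow := by
  simp only [gcdMinFacs, image_subset_iff, Nat.mem_primesBelow]
  intro j hj
  have hij : i ≠ j := fun h => hT j hj (h ▸ hi)
  have h2 := two_le_gcd_of_disjoint (hm i) (hdisj i j hij)
  have hdvd : ((m i).gcd (m j)).minFac ∣ m j := (Nat.minFac_dvd _).trans (Nat.gcd_dvd_right _ _)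
  exact ⟨lt_of_le_of_ne ((Nat.minFac_le (by omega)).trans (hle i j hij))
    fun h => hT j hj (h ▸ hdvd), Nat.minFac_prime (by omega)⟩

theorem disjoint_gcdMinFacs {p : ℕ} (hp : p.Prime) {T : Finset ι} {i i' : ι} (hm : ∀ i, 0 < m i)
    (hdisj : ∀ i j, i ≠ j → Disjoint (congClass (a i) (m i)) (congClass (a j) (m j)))
    (hle : ∀ i j, i ≠ j → (m i).gcd (m j) ≤ p) (hT : ∀ j ∈ T, ¬ p ∣ m j) (hii' : i ≠ i')
    (hi : p ∣ m i) (hi' : p ∣ m i') : Disjoint (gcdMinFacs m T i) (gcdMinFacs m T i') := by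
  simp only [gcdMinFacs, disjoint_left, mem_image]
  rintro _ ⟨j, hj, rfl⟩ ⟨j', -, hjj'⟩
  have hij : i ≠ j := fun h => hT j hj (h ▸ hi)
  have h2 := two_le_gcd_of_disjoint (hm i) (hdisj i j hij)
  set q := ((m i).gcd (m j)).minFac
  have hq : q.Prime := Nat.minFac_prime (by omega)
  have hqi : q ∣ m i := (Nat.minFac_dvd _).trans (Nat.gcd_dvd_left _ _)
  have hqi' : q ∣ m i' := hjj' ▸ (Nat.minFac_dvd _).trans (Nat.gcd_dvd_left _ _)
  have hqp : q = p := (Nat.prime_dvd_prime_iff_eq hq hp).1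
    (gcd_eq_of_dvd_of_dvd hm hle hii' hi hi' ▸ Nat.dvd_gcd hqi hqi')
  exact hT j hj (hqp ▸ (Nat.minFac_dvd _).trans (Nat.gcd_dvd_right _ _))

theorem card_add_two_le_gcdMinFacs {p : ℕ} (hp : p.Prime) (hp29 : p ≤ 29) {T : Finset ι}
    {i₁ i₂ i₃ : ι} (hm : ∀ i, 0 < m i)
    (hdisj : ∀ i j, i ≠ j → Disjoint (congClass (a i) (m i)) (congClass (a j) (m j)))
    (hle : ∀ i j, i ≠ j → (m i).gcd (m j) ≤ p) (hT : ∀ j ∈ T, ¬ p ∣ m j) (hTne : T.Nonempty)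
    (hi₁ : p ∣ m i₁) (hi₂ : p ∣ m i₂) (hi₃ : p ∣ m i₃) (h₁₂ : i₁ ≠ i₂) (h₁₃ : i₁ ≠ i₃)
    (h₂₃ : i₂ ≠ i₃) (h2₁ : 2 ∉ gcdMinFacs m T i₁) (h2₂ : 2 ∉ gcdMinFacs m T i₂) :
    #T + 2 ≤ #(gcdMinFacs m T i₁) * #(gcdMinFacs m T i₂) + 2 * #(gcdMinFacs m T i₃) := by
  have hf : ∀ i, ∀ j ∈ T,
      ((m i).gcd (m j)).minFac ∈ gcdMinFacs m T i ∧ ((m i).gcd (m j)).minFac ∣ m j :=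
    fun i j hj => ⟨mem_image_of_mem _ hj, (Nat.minFac_dvd _).trans (Nat.gcd_dvd_right _ _)⟩
  have hprime : ∀ {i}, p ∣ m i → ∀ x ∈ gcdMinFacs m T i, x.Prime := fun hi x hx =>
    (Nat.mem_primesBelow.1 (gcdMinFacs_subset_primesBelow hm hdisj hle hT hi hx)).2
  exact card_add_two_le_of_gcd_lt_thirty (fun j _ => hm j)
    (fun j _ j' _ hjj' => (hle j j' hjj').trans_lt (by omega)) (hf i₁) (hf i₂) (hf i₃)
    (hprime hi₁) (hprime hi₂) (hprime hi₃) h2₁ h2₂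
    (disjoint_gcdMinFacs hp hm hdisj hle hT h₁₂ hi₁ hi₂)
    (disjoint_gcdMinFacs hp hm hdisj hle hT h₁₃ hi₁ hi₃)
    (disjoint_gcdMinFacs hp hm hdisj hle hT h₂₃ hi₂ hi₃) (hTne.image _)

end System

theorem three_le_card_filter_dvd {p : ℕ} {a : Fin (p + 1) → ℤ} {m : Fin (p + 1) → ℕ}
    (hm : ∀ i, 0 < m i)
    (hdisj : ∀ i j, i ≠ j → Disjoint (congClass (a i) (m i)) (congClass (a j) (m j)))
    (hgcd : ∀ i j, i ≠ j → (m i).gcd (m j) < p + 1) (hmin : ¬ IsCounterexample p) :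
    3 ≤ #{i | p ∣ m i} := by
  by_contra! hS
  obtain ⟨i₀, hi₀⟩ : ∃ i₀, #(({i | p ∣ m i} : Finset _).erase i₀) ≤ 1 := by
    rcases ({i | p ∣ m i} : Finset (Fin (p + 1))).eq_empty_or_nonempty with he | ⟨i₀, hi₀⟩
    · exact ⟨0, by simp [he]⟩
    · exact ⟨i₀, by rw [card_erase_of_mem hi₀]; omega⟩
  refine hmin (isCounterexample_of_embedding i₀.succAboveEmb hm hdisj fun i j hij => ?_)
  have hne : i₀.succAbove i ≠ i₀.succAbove j := Fin.succAbove_right_injective.ne hij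
  refine lt_of_le_of_ne (Nat.lt_succ_iff.1 (hgcd _ _ hne)) fun heq =>
    hne (card_le_one.1 hi₀ _ ?_ _ ?_)
  · simp [Fin.succAbove_ne, ← heq, Nat.gcd_dvd_left]
  · simp [Fin.succAbove_ne, ← heq, Nat.gcd_dvd_right]

theorem isCounterexample_of_prime_succ {p : ℕ} (hp : p.Prime) (hp29 : p ≤ 29)
    (hπ : 3 * #p.primesBelow < p + 3) (h : IsCounterexample (p + 1)) : IsCounterexample p := by
  obtain ⟨a, m, hm, hdisj, hgcd⟩ := h
  by_contra hnce
  have : NeZero p := ⟨hp.ne_zero⟩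
  have hle : ∀ i j, i ≠ j → (m i).gcd (m j) ≤ p := fun i j hij => Nat.lt_succ_iff.1 (hgcd i j hij)
  set S : Finset (Fin (p + 1)) := {i | p ∣ m i}
  set T : Finset (Fin (p + 1)) := {j | ¬ p ∣ m j}
  have hS : ∀ i ∈ S, p ∣ m i := fun i hi => (mem_filter.1 hi).2
  have hT : ∀ j ∈ T, ¬ p ∣ m j := fun j hj => (mem_filter.1 hj).2
  have hST : #S + #T = p + 1 := by
    simpa using card_filter_add_card_filter_not (s := univ) (fun i => p ∣ m i)
  have hTne : T.Nonempty := by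
    have : #S ≤ p := card_le_of_gcd_dvd (fun i _ j _ hij => hdisj i j hij)
      fun i hi i' hi' hii' => (gcd_eq_of_dvd_of_dvd hm hle hii' (hS i hi) (hS i' hi')).dvd
    exact card_pos.1 (by omega)
  set B := gcdMinFacs m T
  have hBP : ∀ i ∈ S, B i ⊆ p.primesBelow := fun i hi =>
    gcdMinFacs_subset_primesBelow hm hdisj hle hT (hS i hi)
  have hB : (S : Set (Fin (p + 1))).PairwiseDisjoint B := fun i hi i' hi' hii' =>
    disjoint_gcdMinFacs hp hm hdisj hle hT hii' (hS i hi) (hS i' hi')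
  have hSπ : #S ≤ #p.primesBelow :=
    (card_le_card_biUnion hB fun i _ => hTne.image _).trans (card_le_card (biUnion_subset.2 hBP))
  obtain ⟨i₁, hi₁, i₂, hi₂, i₃, hi₃, h₁₂, h₁₃, h₂₃, h2₁, h2₂⟩ :=
    exists_three_of_pairwiseDisjoint (three_le_card_filter_dvd hm hdisj hgcd hnce) hB 2
  have hcount : #T + 2 ≤ #(B i₁) * #(B i₂) + 2 * #(B i₃) := card_add_two_le_gcdMinFacs hp hp29
    hm hdisj hle hT hTne (hS i₁ hi₁) (hS i₂ hi₂) (hS i₃ hi₃) h₁₂ h₁₃ h₂₃ h2₁ h2₂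
  have h123 : #(B i₁) + #(B i₂) + #(B i₃) ≤ #p.primesBelow := by
    rw [← card_union_of_disjoint (hB hi₁ hi₂ h₁₂),
      ← card_union_of_disjoint (disjoint_union_left.2 ⟨hB hi₁ hi₃ h₁₃, hB hi₂ hi₃ h₂₃⟩)]
    exact card_le_card (union_subset (union_subset (hBP i₁ hi₁) (hBP i₂ hi₂)) (hBP i₃ hi₃))
  have hπ9 : #p.primesBelow ≤ 9 := (card_le_card (Nat.primesBelow_mono hp29)).trans (by decide)
  have hB₃ : 1 ≤ #(B i₃) := (hTne.image _).card_pos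
  have hmul : #(B i₁) * #(B i₂) ≤ 2 * (#(B i₁) + #(B i₂)) := by
    nlinarith [sq_nonneg ((#(B i₁) : ℤ) - #(B i₂))]
  -- `p + 1 - #S ≤ #T ≤ 2 * (#(B i₁) + #(B i₂) + #(B i₃)) - 2 ≤ 2 * π(p) - 2`
  omega

theorem min_ce_not_in_set_general (k : ℕ) (a : Fin k → ℤ) (m : Fin k → ℕ)
    (hm : ∀ i, 0 < m i)
    (hdisj : ∀ i j, i ≠ j → Disjoint (congClass (a i) (m i)) (congClass (a j) (m j)))
    (hgcd : ∀ i j, i ≠ j → Nat.gcd (m i) (m j) < k)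
    (hkmin : ∀ k', 2 ≤ k' → IsCounterexample k' → k ≤ k') :
    k ∉ ({8, 12, 14, 18, 20, 24, 30} : Finset ℕ) := by
  intro hk
  obtain ⟨p, hp, hp29, hπ, rfl⟩ :
      ∃ p, p.Prime ∧ p ≤ 29 ∧ 3 * #p.primesBelow < p + 3 ∧ k = p + 1 := by
    simp only [mem_insert, mem_singleton] at hk
    rcases hk with rfl | rfl | rfl | rfl | rfl | rfl | rfl <;>
      exact ⟨_, by norm_num, by norm_num, by decide, rfl⟩
  have := hkmin p hp.two_le (isCounterexample_of_prime_succ hp hp29 hπ ⟨a, m, hm, hdisj, hgcd⟩)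
  omega

theorem min_ce_not_in_set (k : ℕ) (a : Fin k → ℤ) (m : Fin k → ℕ)
    (hk : 2 ≤ k)
    (hm : ∀ i, 0 < m i)
    (hdisj : ∀ i j, i ≠ j → Disjoint (congClass (a i) (m i)) (congClass (a j) (m j)))
    (hgcd : ∀ i j, i ≠ j → Nat.gcd (m i) (m j) < k)
    (hkmin : ∀ k', 2 ≤ k' → IsCounterexample k' → k ≤ k')
    (hsummin : ∀ (a' : Fin k → ℤ) (m' : Fin k → ℕ),
      (∀ i, 0 < m' i) →
      (∀ i j, i ≠ j → Disjoint (congClass (a' i) (m' i)) (congClass (a' j) (m' j))) →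
      (∀ i j, i ≠ j → Nat.gcd (m' i) (m' j) < k) →
      ∑ i, m i ≤ ∑ i, m' i) :
    k ∉ ({8, 12, 14, 18, 20, 24, 30} : Finset ℕ) :=
  min_ce_not_in_set_general k a m hm hdisj hgcd hkmin
end

section
/- Let a_1, …, a_ℓ be integers and m_1, …, m_ℓ positive integers, and let M be a positive multiple of lcm{gcd(m_i, m_j) : 1 ≤ i < j ≤ ℓ}. If Σ_{i=1}^{ℓ} M/gcd(m_i, M) > M, then there exist indices i < j and integers α, β, γ with a_i + α·m_i = a_j + β·m_j + γ·M. -/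
open Finset

lemma Int.exists_natCast_modEq (v : ℤ) {d : ℕ} (hd : 0 < d) : ∃ w : ℕ, (w : ℤ) ≡ v [ZMOD d] := by
  refine ⟨(v % d).toNat, ?_⟩
  rw [Int.toNat_of_nonneg (Int.emod_nonneg v (by positivity))]
  exact Int.mod_modEq v d

lemma card_filter_range_intModEq {M d : ℕ} (hd : d ∣ M) (v : ℤ) :
    #{x ∈ range M | ((x : ℕ) : ℤ) ≡ v [ZMOD d]} = M / d := by
  rcases Nat.eq_zero_or_pos d with rfl | hd_pos
  · simp [Nat.eq_zero_of_zero_dvd hd]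
  obtain ⟨w, hw⟩ := Int.exists_natCast_modEq v hd_pos
  have hfilter : ∀ x : ℕ, (x : ℤ) ≡ v [ZMOD d] ↔ x ≡ w [MOD d] := fun x => by
    rw [← Int.natCast_modEq_iff]
    exact ⟨fun h => h.trans hw.symm, fun h => h.trans hw⟩
  simp_rw [hfilter, ← Nat.count_eq_card_filter_range, Nat.count_modEq_card M hd_pos,
    Nat.mod_eq_zero_of_dvd hd]
  simp

lemma exists_lt_modEq_modEq_of_lt_sum {ι : Type*} [Fintype ι] [LinearOrder ι] {M : ℕ}
    (d : ι → ℕ) (v : ι → ℤ) (hd : ∀ i, d i ∣ M) (hsum : M < ∑ i, M / d i) :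
    ∃ i j, i < j ∧ ∃ x : ℤ, x ≡ v i [ZMOD d i] ∧ x ≡ v j [ZMOD d j] := by
  by_contra! hdisj
  set S : ι → Finset ℕ := fun i => {x ∈ range M | ((x : ℕ) : ℤ) ≡ v i [ZMOD d i]}
  have hS : ((univ : Finset ι) : Set ι).PairwiseDisjoint S := by
    intro i _ j _ hij
    refine disjoint_left.mpr fun x hxi hxj => ?_
    simp only [S, mem_filter] at hxi hxj
    rcases hij.lt_or_gt with h | h
    · exact hdisj i j h x hxi.2 hxj.2
    · exact hdisj j i h x hxj.2 hxi.2
  have hle : #(univ.biUnion S) ≤ M :=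
    (card_le_card (biUnion_subset.mpr fun i _ => filter_subset _ _)).trans_eq (card_range M)
  rw [card_biUnion hS] at hle
  simp only [S, card_filter_range_intModEq (hd _)] at hle
  omega

lemma Int.exists_add_mul_eq_add_mul_of_gcd_dvd {a b m n : ℤ} (h : (Int.gcd m n : ℤ) ∣ a - b) :
    ∃ α β : ℤ, a + α * m = b + β * n := by
  obtain ⟨t, ht⟩ := h
  refine ⟨-(m.gcdA n * t), m.gcdB n * t, ?_⟩
  linear_combination ht + t * Int.gcd_eq_gcd_ab m n

theorem pigeonhole_intersection_general (ℓ : ℕ) (a : Fin ℓ → ℤ) (m : Fin ℓ → ℕ)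
    (M : ℕ)
    (hdvd : ((Finset.univ.filter (fun p : Fin ℓ × Fin ℓ => p.1 < p.2)).lcm
        (fun p => Nat.gcd (m p.1) (m p.2))) ∣ M)
    (hsum : M < ∑ i, M / Nat.gcd (m i) M) :
    ∃ i j : Fin ℓ, i < j ∧ ∃ α β γ : ℤ,
      a i + α * (m i : ℤ) = a j + β * (m j : ℤ) + γ * (M : ℤ) := by
  obtain ⟨i, j, hij, x, hxi, hxj⟩ :=
    exists_lt_modEq_modEq_of_lt_sum (fun i => Nat.gcd (m i) M) a (fun i => Nat.gcd_dvd_right _ _)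
      hsum
  have hgM : Nat.gcd (m i) (m j) ∣ M :=
    (dvd_lcm (mem_filter.mpr ⟨mem_univ (i, j), hij⟩)).trans hdvd
  have hgi : Nat.gcd (m i) (m j) ∣ Nat.gcd (m i) M := Nat.dvd_gcd (Nat.gcd_dvd_left _ _) hgM
  have hgj : Nat.gcd (m i) (m j) ∣ Nat.gcd (m j) M := Nat.dvd_gcd (Nat.gcd_dvd_right _ _) hgM
  have hmod : a j ≡ a i [ZMOD Nat.gcd (m i) (m j)] :=
    (hxj.of_dvd (Int.natCast_dvd_natCast.mpr hgj)).symm.trans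
      (hxi.of_dvd (Int.natCast_dvd_natCast.mpr hgi))
  obtain ⟨α, β, h⟩ := Int.exists_add_mul_eq_add_mul_of_gcd_dvd (a := a i) (b := a j)
    (m := m i) (n := m j) (by simpa [Int.gcd_natCast_natCast] using hmod.dvd)
  exact ⟨i, j, hij, α, β, 0, by simpa using h⟩

theorem pigeonhole_intersection (ℓ : ℕ) (a : Fin ℓ → ℤ) (m : Fin ℓ → ℕ)
    (hm : ∀ i, 0 < m i) (M : ℕ) (hM : 0 < M)
    (hdvd : ((Finset.univ.filter (fun p : Fin ℓ × Fin ℓ => p.1 < p.2)).lcm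
        (fun p => Nat.gcd (m p.1) (m p.2))) ∣ M)
    (hsum : M < ∑ i, M / Nat.gcd (m i) M) :
    ∃ i j : Fin ℓ, i < j ∧ ∃ α β γ : ℤ,
      a i + α * (m i : ℤ) = a j + β * (m j : ℤ) + γ * (M : ℤ) :=
  pigeonhole_intersection_general ℓ a m M hdvd hsum
end
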